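/- arXiv:2006.16119 — 6 statements merged into one kernel-verified Lean document; each statement's English description precedes it below -/
import Mathlib

section
/- Let m1 > m2 be positive integers and let q > 1 satisfy m2 < m1 < q − 1. Then D_{m1,m2}(q) contains the point log(m2+1)/log q; that is, there exists t ∈ U_{m1,m2}(q) with dim_H(Γ_{q,m1} ∩ (Γ_{q,m2} + t)) = log(m2+1)/log q. -/
open scoped ENNReal

/-- `Gamma q m` is the set of sums `∑ cᵢ/qⁱ` with digits `cᵢ ∈ {0,…,m}`. -/
noncomputable def Gamma (q : ℝ) (m : ℕ) : Set ℝ :=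
  {x | ∃ c : ℕ → ℕ, (∀ i, c i ≤ m) ∧ x = ∑' i : ℕ, (c i : ℝ) / q ^ (i + 1)}

/-- `(a i)` is an expansion of `t` in base `q` over the alphabet `{-m2,…,m1}`. -/
def IsExpansion (q : ℝ) (m1 m2 : ℕ) (a : ℕ → ℤ) (t : ℝ) : Prop :=
  (∀ i, -(m2 : ℤ) ≤ a i ∧ a i ≤ (m1 : ℤ)) ∧ t = ∑' i : ℕ, (a i : ℝ) / q ^ (i + 1)

/-- `U_{m1,m2}(q)`: reals with a unique expansion over `{-m2,…,m1}`. -/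
def uniqSet (q : ℝ) (m1 m2 : ℕ) : Set ℝ :=
  {t | ∃! a : ℕ → ℤ, IsExpansion q m1 m2 a t}

/-- `D_{m1,m2}(q)`: the set of Hausdorff dimensions of `Γ_{q,m1} ∩ (Γ_{q,m2} + t)`
for `t ∈ U_{m1,m2}(q)`. -/
noncomputable def dimSet (q : ℝ) (m1 m2 : ℕ) : Set ℝ≥0∞ :=
  {d | ∃ t ∈ uniqSet q m1 m2,
    dimH (Gamma q m1 ∩ ((fun x => x + t) '' Gamma q m2)) = d}

/-!
Since `m2 ≤ m1 < q - 1`, a nonzero digit sequence over `{-m1, …, m1}` has nonzero value: its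
leading nonzero digit outweighs the whole tail. So `t = 0` lies in `U_{m1,m2}(q)`, and the
intersection for this `t` is `Γ_{q,m2} ⊆ Γ_{q,m1}`. Now `dim_H Γ_{q,m} = log (m + 1) / log q` when
`m < q - 1`. For the upper bound, cover `Γ_{q,m}` by the `(m + 1) ^ n` images of the length-`n`
cylinders; each has diameter `O(q ^ (-n))`. For the lower bound, the digit map is injective, so
reading each point's digits in base `m + 1` gives a Hölder map of exponent `log (m + 1) / log q`
from `Γ_{q,m}` onto `[0, 1]`.
-/

open scoped NNReal
open Filter Set Topology

section SeriesEstimates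

variable {q M : ℝ} {b : ℕ → ℝ}

theorem one_sub_div_sub_one_pos (hq : 1 < q) (hM : M < q - 1) : 0 < 1 - M / (q - 1) := by
  rw [sub_pos, div_lt_one (by linarith)]
  exact hM

theorem hasSum_div_pow_succ (hq : 1 < q) (c : ℝ) :
    HasSum (fun i : ℕ => c / q ^ (i + 1)) (c / (q - 1)) := by
  have hq0 : q ≠ 0 := by positivity
  have hterm : (fun i : ℕ => c / q ^ (i + 1)) = fun i => c / q * q⁻¹ ^ i := by
    ext i
    rw [pow_succ', inv_pow]
    field_simp
  have hlim : c / (q - 1) = c / q * (1 - q⁻¹)⁻¹ := by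
    have hq1 : q - 1 ≠ 0 := by linarith
    field_simp
  rw [hterm, hlim]
  exact (hasSum_geometric_of_lt_one (by positivity) (inv_lt_one_of_one_lt₀ hq)).mul_left _

theorem summable_div_pow_succ (hq : 1 < q) (hb : ∀ i, |b i| ≤ M) :
    Summable fun i => b i / q ^ (i + 1) :=
  (hasSum_div_pow_succ hq M).summable.of_norm_bounded fun i => by
    rw [Real.norm_eq_abs, abs_div, abs_of_pos (pow_pos (zero_lt_one.trans hq) _)]
    exact div_le_div_of_nonneg_right (hb i) (pow_nonneg (zero_le_one.trans hq.le) _)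

theorem abs_tsum_div_pow_succ_le (hq : 1 < q) (hb : ∀ i, |b i| ≤ M) :
    |∑' i, b i / q ^ (i + 1)| ≤ M / (q - 1) := by
  have hq0 : 0 < q := zero_lt_one.trans hq
  have hs := summable_div_pow_succ hq hb
  calc |∑' i, b i / q ^ (i + 1)| ≤ ∑' i, |b i / q ^ (i + 1)| := by
        simpa only [Real.norm_eq_abs] using norm_tsum_le_tsum_norm hs.norm
    _ ≤ ∑' i, M / q ^ (i + 1) := by
        refine hs.abs.tsum_le_tsum (fun i => ?_)
          (hasSum_div_pow_succ hq M).summable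
        rw [abs_div, abs_of_pos (pow_pos hq0 _)]
        exact div_le_div_of_nonneg_right (hb i) (pow_nonneg hq0.le _)
    _ = M / (q - 1) := (hasSum_div_pow_succ hq M).tsum_eq

theorem tsum_div_pow_succ_eq_sum_add (hq : 1 < q) (hb : ∀ i, |b i| ≤ M) (n : ℕ) :
    ∑' i, b i / q ^ (i + 1) =
      ∑ i ∈ Finset.range n, b i / q ^ (i + 1) + (∑' i, b (i + n) / q ^ (i + 1)) / q ^ n := by
  rw [← (summable_div_pow_succ hq hb).sum_add_tsum_nat_add n, ← tsum_div_const]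
  congr 1
  refine tsum_congr fun i => ?_
  rw [div_div, ← pow_add, add_right_comm]

theorem abs_tsum_div_pow_succ_le_of_eq_zero (hq : 1 < q) (hb : ∀ i, |b i| ≤ M) {n : ℕ}
    (h0 : ∀ i < n, b i = 0) :
    |∑' i, b i / q ^ (i + 1)| ≤ M / (q - 1) / q ^ n := by
  have hq0 : 0 < q := zero_lt_one.trans hq
  rw [tsum_div_pow_succ_eq_sum_add hq hb n,
    Finset.sum_eq_zero fun i hi => by rw [h0 i (Finset.mem_range.mp hi), zero_div], zero_add,
    abs_div, abs_of_pos (pow_pos hq0 n)]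
  exact div_le_div_of_nonneg_right (abs_tsum_div_pow_succ_le hq fun i => hb (i + n))
    (pow_nonneg hq0.le n)

/-- The leading nonzero term dominates the tail because the tail is at most `M / (q - 1)` times
the next power of `q⁻¹`. -/
theorem le_abs_tsum_div_pow_succ (hq : 1 < q) (hb : ∀ i, |b i| ≤ M) {n : ℕ}
    (h0 : ∀ i < n, b i = 0) (hn : 1 ≤ |b n|) :
    (1 - M / (q - 1)) / q ^ (n + 1) ≤ |∑' i, b i / q ^ (i + 1)| := by
  have hq0 : 0 < q := zero_lt_one.trans hq
  have hhead : ∑ i ∈ Finset.range (n + 1), b i / q ^ (i + 1) = b n / q ^ (n + 1) := by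
    rw [Finset.sum_range_succ, Finset.sum_eq_zero fun i hi => by
      rw [h0 i (Finset.mem_range.mp hi), zero_div], zero_add]
  have htail := abs_tsum_div_pow_succ_le hq fun i => hb (i + (n + 1))
  rw [tsum_div_pow_succ_eq_sum_add hq hb (n + 1), hhead, ← add_div, abs_div,
    abs_of_pos (pow_pos hq0 _)]
  refine div_le_div_of_nonneg_right ?_ (pow_nonneg hq0.le _)
  calc 1 - M / (q - 1) ≤ |b n| - |∑' i, b (i + (n + 1)) / q ^ (i + 1)| := by linarith
    _ ≤ |b n + ∑' i, b (i + (n + 1)) / q ^ (i + 1)| := by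
        simpa using abs_sub_abs_le_abs_sub (b n) (-∑' i, b (i + (n + 1)) / q ^ (i + 1))

theorem eq_zero_of_tsum_div_pow_succ_eq_zero (hq : 1 < q) (hM : M < q - 1) {a : ℕ → ℤ}
    (ha : ∀ i, |(a i : ℝ)| ≤ M) (h : ∑' i, (a i : ℝ) / q ^ (i + 1) = 0) : a = 0 := by
  by_contra hne
  have hlow := le_abs_tsum_div_pow_succ hq ha (n := PiNat.firstDiff a 0)
    (fun i hi => by simp [PiNat.apply_eq_of_lt_firstDiff hi])
    (by exact_mod_cast Int.one_le_abs (PiNat.apply_firstDiff_ne hne))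
  rw [h, abs_zero] at hlow
  exact (div_pos (one_sub_div_sub_one_pos hq hM) (pow_pos (zero_lt_one.trans hq) _)).not_ge hlow

end SeriesEstimates

section DigitValue

variable {q : ℝ} {m : ℕ}

noncomputable def digitValue (q : ℝ) {m : ℕ} (d : ℕ → Fin (m + 1)) : ℝ :=
  ∑' i, ((d i : ℕ) : ℝ) / q ^ (i + 1)

theorem Gamma_eq_range_digitValue : Gamma q m = range (digitValue q (m := m)) := by
  ext x
  constructor
  · rintro ⟨c, hc, rfl⟩
    exact ⟨fun i => ⟨c i, Nat.lt_succ_of_le (hc i)⟩, rfl⟩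
  · rintro ⟨d, rfl⟩
    exact ⟨fun i => d i, fun i => Fin.is_le (d i), rfl⟩

theorem Gamma_mono {m' : ℕ} (h : m ≤ m') : Gamma q m ⊆ Gamma q m' := by
  rintro x ⟨c, hc, rfl⟩
  exact ⟨c, fun i => (hc i).trans h, rfl⟩

theorem abs_digit_sub_le (d e : ℕ → Fin (m + 1)) (i : ℕ) :
    |((d i : ℕ) : ℝ) - (e i : ℕ)| ≤ m := by
  have hd : ((d i : ℕ) : ℝ) ≤ m := by exact_mod_cast Fin.is_le (d i)
  have he : ((e i : ℕ) : ℝ) ≤ m := by exact_mod_cast Fin.is_le (e i)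
  rw [abs_le]
  constructor <;> linarith [(d i : ℕ).cast_nonneg (α := ℝ), (e i : ℕ).cast_nonneg (α := ℝ)]

theorem digitValue_sub (hq : 1 < q) (d e : ℕ → Fin (m + 1)) :
    digitValue q d - digitValue q e = ∑' i, (((d i : ℕ) : ℝ) - (e i : ℕ)) / q ^ (i + 1) := by
  have hdigit : ∀ d : ℕ → Fin (m + 1), ∀ i, |((d i : ℕ) : ℝ)| ≤ m := fun d i => by
    rw [abs_of_nonneg (Nat.cast_nonneg _)]
    exact_mod_cast Fin.is_le (d i)
  simp_rw [sub_div]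
  exact ((summable_div_pow_succ hq (hdigit d)).tsum_sub (summable_div_pow_succ hq (hdigit e))).symm

theorem digitValue_injective (hq : 1 < q) (hm : (m : ℝ) < q - 1) :
    Function.Injective (digitValue q (m := m)) := by
  intro d e hde
  have hzero := eq_zero_of_tsum_div_pow_succ_eq_zero hq hm
    (a := fun i => ((d i : ℕ) : ℤ) - (e i : ℕ)) (fun i => by exact_mod_cast abs_digit_sub_le d e i)
    (by push_cast; rw [← digitValue_sub hq, hde, sub_self])
  funext i
  have := congrFun hzero i
  simp only [Pi.zero_apply, sub_eq_zero, Nat.cast_inj] at this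
  exact Fin.ext this

theorem abs_digitValue_sub_le (hq : 1 < q) {d e : ℕ → Fin (m + 1)} {n : ℕ}
    (h : ∀ i < n, d i = e i) :
    |digitValue q d - digitValue q e| ≤ m / (q - 1) / q ^ n := by
  rw [digitValue_sub hq]
  exact abs_tsum_div_pow_succ_le_of_eq_zero hq (abs_digit_sub_le d e) fun i hi => by
    rw [h i hi, sub_self]

theorem le_abs_digitValue_sub (hq : 1 < q) {d e : ℕ → Fin (m + 1)} (hne : d ≠ e) :
    (1 - m / (q - 1)) / q ^ (PiNat.firstDiff d e + 1) ≤ |digitValue q d - digitValue q e| := by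
  rw [digitValue_sub hq]
  refine le_abs_tsum_div_pow_succ hq (abs_digit_sub_le d e)
    (fun i hi => by rw [PiNat.apply_eq_of_lt_firstDiff hi, sub_self]) ?_
  have hdiff : d (PiNat.firstDiff d e) ≠ e (PiNat.firstDiff d e) := PiNat.apply_firstDiff_ne hne
  replace hdiff : ((d (PiNat.firstDiff d e) : ℕ) : ℤ) ≠ (e (PiNat.firstDiff d e) : ℕ) := by
    exact_mod_cast Fin.val_ne_of_ne hdiff
  exact_mod_cast Int.one_le_abs (sub_ne_zero.mpr hdiff)

end DigitValue

section Dimension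

open MeasureTheory

variable {q : ℝ} {m : ℕ}

theorem pow_rpow_logb (hq : 1 < q) {x : ℝ} (hx : 0 < x) (n : ℕ) :
    (q ^ n) ^ Real.logb q x = x ^ n := by
  rw [← Real.rpow_pow_comm (by linarith), Real.rpow_logb (by linarith) hq.ne' hx]

/-- Cover `Gamma q m` by the `(m + 1) ^ n` images of the cylinders of length `n`. -/
theorem dimH_Gamma_le (hq : 1 < q) :
    dimH (Gamma q m) ≤ ENNReal.ofReal (Real.logb q (m + 1)) := by
  set s := Real.logb q (m + 1)
  have hs : 0 ≤ s := Real.logb_nonneg hq (by linarith [(m.cast_nonneg : (0 : ℝ) ≤ m)])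
  set K := (m : ℝ) / (q - 1)
  have hK : 0 ≤ K := div_nonneg m.cast_nonneg (by linarith)
  set t : ∀ n : ℕ, (Fin n → Fin (m + 1)) → Set ℝ :=
    fun n w => digitValue q '' {d | ∀ i : Fin n, d i = w i}
  have hcover : ∀ n, Gamma q m ⊆ ⋃ w, t n w := by
    intro n
    rw [Gamma_eq_range_digitValue]
    rintro _ ⟨d, rfl⟩
    exact mem_iUnion.mpr ⟨fun i => d i, d, fun i => rfl, rfl⟩
  have hdiam : ∀ n w, Metric.ediam (t n w) ≤ ENNReal.ofReal (K / q ^ n) := by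
    intro n w
    refine Metric.ediam_le ?_
    rintro _ ⟨d, hd, rfl⟩ _ ⟨e, he, rfl⟩
    rw [edist_dist, Real.dist_eq]
    exact ENNReal.ofReal_le_ofReal
      (abs_digitValue_sub_le hq fun i hi => (hd ⟨i, hi⟩).trans (he ⟨i, hi⟩).symm)
  have hr : Tendsto (fun n : ℕ => ENNReal.ofReal (K / q ^ n)) atTop (𝓝 0) := by
    rw [← ENNReal.ofReal_zero]
    refine ENNReal.tendsto_ofReal ?_
    simpa [div_eq_mul_inv] using (tendsto_pow_atTop_nhds_zero_of_lt_one (by positivity)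
      (inv_lt_one_of_one_lt₀ hq)).const_mul K
  have hsum : ∀ n, ∑ w, Metric.ediam (t n w) ^ s ≤ ENNReal.ofReal (K ^ s) := by
    intro n
    have hqn : 0 < q ^ n := pow_pos (by linarith) n
    calc ∑ w, Metric.ediam (t n w) ^ s
        ≤ ∑ _w : Fin n → Fin (m + 1), ENNReal.ofReal (K / q ^ n) ^ s :=
          Finset.sum_le_sum fun w _ => ENNReal.rpow_le_rpow (hdiam n w) hs
      _ = ENNReal.ofReal (K ^ s) := by
          rw [Finset.sum_const, Finset.card_univ, Fintype.card_fun, Fintype.card_fin,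
            Fintype.card_fin, nsmul_eq_mul, ENNReal.ofReal_rpow_of_nonneg (by positivity) hs,
            Real.div_rpow hK hqn.le, pow_rpow_logb hq (by positivity), ← ENNReal.ofReal_natCast,
            ← ENNReal.ofReal_mul (by positivity)]
          congr 1
          push_cast
          field_simp
  have hμ : μH[s] (Gamma q m) ≠ ⊤ :=
    ((Measure.hausdorffMeasure_le_liminf_sum s _ _ hr t (.of_forall hdiam)
      (.of_forall hcover)).trans (liminf_le_of_frequently_le' (.of_forall hsum))).trans_lt
      ENNReal.ofReal_lt_top |>.ne
  rw [← Real.coe_toNNReal s hs] at hμ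
  exact dimH_le_of_hausdorffMeasure_ne_top hμ

end Dimension

section Holder

variable {X Y : Type*} [PseudoMetricSpace X] [PseudoMetricSpace Y]

theorem holderOnWith_of_dist_le {C r : ℝ≥0} {f : X → Y} {s : Set X}
    (h : ∀ x ∈ s, ∀ y ∈ s, dist (f x) (f y) ≤ C * dist x y ^ (r : ℝ)) : HolderOnWith C r f s := by
  intro x hx y hy
  rw [edist_nndist, edist_nndist, ← ENNReal.coe_rpow_of_nonneg _ r.coe_nonneg, ← ENNReal.coe_mul,
    ENNReal.coe_le_coe, ← NNReal.coe_le_coe]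
  push_cast
  exact h x hx y hy

end Holder

section LowerBound

variable {q : ℝ} {m : ℕ}

/-- Two digit sequences first differing at index `n` have `digitValue`s at least a constant
times `q ^ (-n)` apart, while their base `m + 1` values are at most `(m + 1) ^ (-n)` apart. -/
theorem abs_ofDigits_sub_le_rpow_abs_digitValue_sub (hq : 1 < q) (hm : (m : ℝ) < q - 1)
    (d e : ℕ → Fin (m + 1)) :
    |Real.ofDigits d - Real.ofDigits e| ≤
      (m + 1) * (1 - m / (q - 1)) ^ (-Real.logb q (m + 1)) *
        |digitValue q d - digitValue q e| ^ Real.logb q (m + 1) := by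
  set s := Real.logb q (m + 1)
  have hs : 0 ≤ s := Real.logb_nonneg hq (by linarith [(m.cast_nonneg : (0 : ℝ) ≤ m)])
  have hε := one_sub_div_sub_one_pos hq hm
  have hC : 0 ≤ (m + 1) * (1 - m / (q - 1)) ^ (-s) := by
    have := Real.rpow_pos_of_pos hε (-s)
    positivity
  rcases eq_or_ne d e with rfl | hne
  · simp only [sub_self, abs_zero]
    positivity
  set n := PiNat.firstDiff d e
  have hup : |Real.ofDigits d - Real.ofDigits e| ≤ (((m : ℝ) + 1) ^ n)⁻¹ := by
    simpa using Real.abs_ofDigits_sub_ofDigits_le (x := d) (y := e)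
      fun i hi => PiNat.apply_eq_of_lt_firstDiff hi
  have hq0 : 0 < q := by linarith
  calc |Real.ofDigits d - Real.ofDigits e| ≤ (((m : ℝ) + 1) ^ n)⁻¹ := hup
    _ = (m + 1) * (1 - m / (q - 1)) ^ (-s) * ((1 - m / (q - 1)) / q ^ (n + 1)) ^ s := by
        rw [Real.div_rpow hε.le (by positivity), pow_rpow_logb hq (by positivity),
          Real.rpow_neg hε.le, pow_succ]
        have : 0 < (1 - m / (q - 1)) ^ s := Real.rpow_pos_of_pos hε s
        field_simp
    _ ≤ (m + 1) * (1 - m / (q - 1)) ^ (-s) * |digitValue q d - digitValue q e| ^ s :=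
        mul_le_mul_of_nonneg_left
          (Real.rpow_le_rpow (by positivity) (le_abs_digitValue_sub hq hne) hs) hC

theorem le_dimH_Gamma (hq : 1 < q) (hm1 : 1 ≤ m) (hm : (m : ℝ) < q - 1) :
    ENNReal.ofReal (Real.logb q (m + 1)) ≤ dimH (Gamma q m) := by
  set s := Real.logb q (m + 1)
  have hs : 0 < s := Real.logb_pos hq (by norm_cast; omega)
  set C := (m + 1) * (1 - m / (q - 1)) ^ (-s)
  have hC : 0 ≤ C := by
    have := Real.rpow_pos_of_pos (one_sub_div_sub_one_pos hq hm) (-s)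
    positivity
  set F := Real.ofDigits ∘ Function.invFun (digitValue q (m := m))
  have hFd : F ∘ digitValue q = Real.ofDigits := funext fun d =>
    congrArg Real.ofDigits (Function.leftInverse_invFun (digitValue_injective hq hm) d)
  have hF : HolderOnWith C.toNNReal s.toNNReal F (Gamma q m) := by
    rw [Gamma_eq_range_digitValue]
    refine holderOnWith_of_dist_le ?_
    rintro _ ⟨d, rfl⟩ _ ⟨e, rfl⟩
    rw [Real.dist_eq, Real.dist_eq, Real.coe_toNNReal _ hC, Real.coe_toNNReal _ hs.le]
    simpa only [← Function.comp_apply (f := F), hFd] using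
      abs_ofDigits_sub_le_rpow_abs_digitValue_sub hq hm d e
  have hIcc : Icc 0 1 ⊆ F '' Gamma q m := by
    rw [Gamma_eq_range_digitValue, ← range_comp, hFd, ← image_univ]
    exact Real.ofDigits_SurjOn (by omega)
  have hdim : 1 ≤ dimH (Gamma q m) / s.toNNReal := calc
    1 = dimH (Icc (0 : ℝ) 1) := by
      rw [Real.dimH_of_nonempty_interior (by simp), Module.finrank_self, Nat.cast_one]
    _ ≤ dimH (F '' Gamma q m) := dimH_mono hIcc
    _ ≤ dimH (Gamma q m) / s.toNNReal := hF.dimH_image_le (Real.toNNReal_pos.mpr hs)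
  rwa [ENNReal.le_div_iff_mul_le (.inl (by simpa using hs)) (.inl ENNReal.coe_ne_top),
    one_mul] at hdim

theorem dimH_Gamma (hq : 1 < q) (hm1 : 1 ≤ m) (hm : (m : ℝ) < q - 1) :
    dimH (Gamma q m) = ENNReal.ofReal (Real.logb q (m + 1)) :=
  (dimH_Gamma_le hq).antisymm (le_dimH_Gamma hq hm1 hm)

end LowerBound

theorem zero_mem_uniqSet {q : ℝ} {m1 m2 : ℕ} (hq : 1 < q) (hm : m2 ≤ m1)
    (h1 : (m1 : ℝ) < q - 1) : 0 ∈ uniqSet q m1 m2 := by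
  refine ⟨0, ⟨fun i => by simp, by simp⟩, ?_⟩
  rintro a ⟨ha, hsum⟩
  refine eq_zero_of_tsum_div_pow_succ_eq_zero hq h1 (fun i => abs_le.mpr ⟨?_, ?_⟩) hsum.symm
  · have : -(m1 : ℤ) ≤ a i := le_trans (by omega) (ha i).1
    exact_mod_cast this
  · exact_mod_cast (ha i).2

theorem stmt2 (m1 m2 : ℕ) (hm2 : 1 ≤ m2) (hm : m2 < m1) (q : ℝ) (hq : 1 < q)
    (h1 : (m1 : ℝ) < q - 1) :
    ENNReal.ofReal (Real.log (m2 + 1) / Real.log q) ∈ dimSet q m1 m2 := by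
  have h2 : (m2 : ℝ) < q - 1 := lt_trans (by exact_mod_cast hm) h1
  refine ⟨0, zero_mem_uniqSet hq hm.le h1, ?_⟩
  simp only [add_zero, image_id']
  rw [inter_eq_right.mpr (Gamma_mono hm.le), dimH_Gamma hq hm2 h2]
  rfl
end

section
/- Let M ≥ 1 and ℓ ≥ 1 be integers, and let (τ_i)_{i≥0} be the mirror sequence generated by an initial word τ_0⋯τ_{ℓ−1} ∈ {0,...,M}^ℓ. Then every nonempty finite word δ over {0,...,M} has a density d(δ) := lim_{m→∞} N^δ(τ_0⋯τ_{m−1})/m in (τ_i). Moreover, for every integer n ≥ 0 satisfying 4^n·ℓ ≥ |δ| − 1 one has d(δ) = d(δ̄) = (P − N)/(6·4^n·ℓ), where N = N^δ(τ_0⋯τ_{4^nℓ−1}) + N^{δ̄}(τ_0⋯τ_{4^nℓ−1}) and P = N^δ(τ_0⋯τ_{4^{n+1}ℓ−1}) + N^{δ̄}(τ_0⋯τ_{4^{n+1}ℓ−1}). -/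
/-!
Write `T j` for the prefix of length `2 ^ j * ℓ`, so that `T (j + 1)` is `T j` followed by its
reflection. Counting occurrences across the seam gives
`N^δ(T (j + 1)) = N^δ(T j) + N^δ̄(T j) + (seam term)`, and once `2 ^ j * ℓ ≥ |δ| - 1` the seam
word is `2`-periodic in `j`, because the suffix of `T (j + 1)` is the reflection of that of `T j`.
So `e j = N^δ(T j) + N^δ̄(T j)` satisfies `e (j + 1) = 2 * e j + g j` with `g` `2`-periodic, and
for the claimed density `ρ` the error `e j - 2 * ρ * 2 ^ j * ℓ` is `2`-periodic, hence
bounded. A prefix of length `2 ^ j * ℓ + r` with `r < 2 ^ j * ℓ` is `T j` followed by a reflected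
prefix of length `r`, which swaps `δ` and `δ̄` at the cost of a bounded seam term; iterating this
bounds the counting errors by `ε N + C` for every `ε > 0`.
-/

/-- Number of starting positions at which `d` occurs as a consecutive subword of `e`. -/
def countOcc (d e : List ℕ) : ℕ :=
  ((Finset.range (e.length + 1 - d.length)).filter
    (fun i => (e.drop i).take d.length = d)).card

open Filter Topology Function

section Words

variable {d : List ℕ}

theorem countOcc_le (d e : List ℕ) : countOcc d e ≤ e.length + 1 - d.length :=
  (Finset.card_filter_le _ _).trans (Finset.card_range _).le

theorem countOcc_eq_zero_of_length_lt {e : List ℕ} (h : e.length < d.length) :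
    countOcc d e = 0 :=
  Nat.le_zero.1 <| (countOcc_le d e).trans (by omega)

theorem countOcc_eq_card_filter_range (hd : d ≠ []) (e : List ℕ) :
    countOcc d e = ((Finset.range e.length).filter
      fun i => (e.drop i).take d.length = d).card := by
  have hk := List.length_pos_iff.mpr hd
  unfold countOcc
  congr 1
  ext i
  simp only [Finset.mem_filter, Finset.mem_range, and_congr_left_iff]
  intro hw
  have := congrArg List.length hw
  simp only [List.length_take, List.length_drop] at this
  omega

theorem countOcc_append_add_countOcc (hd : d ≠ []) {p w w' : List ℕ}
    (h : ∀ i < p.length,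
      ((p ++ w).drop i).take d.length = ((p ++ w').drop i).take d.length) :
    countOcc d (p ++ w) + countOcc d w' = countOcc d (p ++ w') + countOcc d w := by
  have hsplit : ∀ v, countOcc d (p ++ v) = ((Finset.range p.length).filter
      fun i => ((p ++ v).drop i).take d.length = d).card + countOcc d v := fun v => by
    simp only [countOcc_eq_card_filter_range hd, Finset.card_filter, List.length_append,
      Finset.sum_range_add, List.drop_length_add_append]
  rw [hsplit, hsplit, Finset.filter_congr fun i hi => by rw [h i (Finset.mem_range.1 hi)]]
  ring

theorem countOcc_append (hd : d ≠ []) (u v : List ℕ) :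
    countOcc d (u ++ v) = countOcc d u + countOcc d v +
      countOcc d (u.rtake (d.length - 1) ++ v.take (d.length - 1)) := by
  have hk := List.length_pos_iff.mpr hd
  have hshort : ∀ w : List ℕ, w.length ≤ d.length - 1 → countOcc d w = 0 := fun w hw =>
    countOcc_eq_zero_of_length_lt (by omega)
  set s := u.length - (d.length - 1)
  set u₂ := u.rtake (d.length - 1)
  have hu₂ : u₂.length ≤ d.length - 1 := by simp [u₂, List.rtake]; omega
  have hu : u.take s ++ u₂ = u := List.take_append_drop s u
  have h₁ : countOcc d (u ++ v) + countOcc d u₂ = countOcc d u + countOcc d (u₂ ++ v) := by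
    rw [← hu, List.append_assoc]
    refine countOcc_append_add_countOcc hd fun i hi => ?_
    rw [← List.append_assoc, hu]
    simp only [List.length_take] at hi
    rw [List.drop_append_of_le_length (by omega), List.take_append_of_le_length (by simp; omega)]
  have h₂ : countOcc d (u₂ ++ v) + countOcc d (v.take (d.length - 1)) =
      countOcc d (u₂ ++ v.take (d.length - 1)) + countOcc d v := by
    refine countOcc_append_add_countOcc hd fun i hi => ?_
    simp only [List.drop_append_of_le_length hi.le, List.take_append, List.take_take,
      List.length_drop]
    congr 2
    omega
  have h₃ := hshort u₂ hu₂
  have h₄ := hshort (v.take (d.length - 1)) (by simp)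
  omega

theorem exists_countOcc_append_eq (hd : d ≠ []) (u v : List ℕ) :
    ∃ c ≤ d.length - 1, countOcc d (u ++ v) = countOcc d u + countOcc d v + c := by
  refine ⟨_, ?_, countOcc_append hd u v⟩
  have h₁ := countOcc_le d (u.rtake (d.length - 1) ++ v.take (d.length - 1))
  have h₂ : (u.rtake (d.length - 1)).length ≤ d.length - 1 := by simp [List.rtake]; omega
  have hk := List.length_pos_iff.mpr hd
  simp only [List.length_append, List.length_take] at h₁
  omega

variable {M : ℕ}

theorem map_sub_map_sub {l : List ℕ} (h : ∀ x ∈ l, x ≤ M) :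
    (l.map (M - ·)).map (M - ·) = l := by
  rw [List.map_map]
  conv_rhs => rw [← List.map_id l]
  exact List.map_congr_left fun x hx => Nat.sub_sub_self (h x hx)

theorem countOcc_map_sub {e : List ℕ} (hd : ∀ x ∈ d, x ≤ M) (he : ∀ x ∈ e, x ≤ M) :
    countOcc d (e.map (M - ·)) = countOcc (d.map (M - ·)) e := by
  unfold countOcc
  simp only [List.length_map]
  congr 1
  refine Finset.filter_congr fun i _ => ?_
  have hw : ∀ x ∈ (e.drop i).take d.length, x ≤ M := fun x hx =>
    he x (List.mem_of_mem_drop (List.mem_of_mem_take hx))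
  rw [← List.map_drop, ← List.map_take]
  constructor
  · intro h
    rw [← map_sub_map_sub hw, h]
  · intro h
    rw [h, map_sub_map_sub hd]

end Words

theorem exists_two_pow_mul_le_lt {ℓ J N : ℕ} (hℓ : 0 < ℓ) (hN : 2 ^ J * ℓ ≤ N) :
    ∃ j, J ≤ j ∧ 2 ^ j * ℓ ≤ N ∧ N < 2 ^ (j + 1) * ℓ := by
  have hq : 2 ^ J ≤ N / ℓ := (Nat.le_div_iff_mul_le hℓ).2 hN
  exact ⟨Nat.log 2 (N / ℓ), Nat.le_log_of_pow_le one_lt_two hq,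
    (Nat.le_div_iff_mul_le hℓ).1 (Nat.pow_log_le_self 2 (Nat.two_pow_pos J |>.trans_le hq).ne'),
    (Nat.div_lt_iff_lt_mul hℓ).1 (Nat.lt_pow_succ_log_self one_lt_two _)⟩

theorem Function.Periodic.exists_abs_le {u : ℕ → ℝ} {c : ℕ} (h : Periodic u c) (hc : 0 < c) :
    ∃ B, ∀ i, |u i| ≤ B :=
  ⟨∑ k ∈ Finset.range c, |u k|, fun i => h.map_mod_nat i ▸
    Finset.single_le_sum (fun k _ => abs_nonneg (u k)) (Finset.mem_range.2 (Nat.mod_lt i hc))⟩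

theorem tendsto_div_atTop_of_le_add {P : ℕ → ℝ} {ℓ J : ℕ} {K : ℝ} (hℓ : 0 < ℓ)
    (hP : ∀ N, 0 ≤ P N) (hstep : ∀ j ≥ J, ∀ r < 2 ^ j * ℓ, P (2 ^ j * ℓ + r) ≤ P r + K) :
    Tendsto (fun N => P N / N) atTop (𝓝 0) := by
  have hlin : ∀ ε > 0, ∃ C, ∀ N : ℕ, P N ≤ ε * N + C := by
    intro ε hε
    obtain ⟨J', hJ'⟩ := pow_unbounded_of_one_lt (K / ε) (one_lt_two (α := ℝ))
    refine ⟨∑ i ∈ Finset.range (2 ^ max J J' * ℓ), P i, fun N => ?_⟩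
    induction N using Nat.strong_induction_on with
    | _ N ih =>
      rcases lt_or_ge N (2 ^ max J J' * ℓ) with hN | hN
      · have := Finset.single_le_sum (fun i _ => hP i) (Finset.mem_range.2 hN)
        have : 0 ≤ ε * N := by positivity
        linarith
      obtain ⟨j, hj, hjN, hNj⟩ := exists_two_pow_mul_le_lt hℓ hN
      obtain ⟨r, rfl⟩ := Nat.exists_eq_add_of_le hjN
      have hr : r < 2 ^ j * ℓ := by rw [pow_succ] at hNj; linarith
      have hK : K ≤ ε * (2 ^ j * ℓ) := by
        have h₁ : (2 : ℝ) ^ J' ≤ 2 ^ j := pow_le_pow_right₀ one_le_two (le_of_max_le_right hj)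
        have h₂ : (2 : ℝ) ^ j ≤ 2 ^ j * ℓ :=
          le_mul_of_one_le_right (by positivity) (by exact_mod_cast hℓ)
        rw [div_lt_iff₀ hε] at hJ'
        nlinarith
      calc P (2 ^ j * ℓ + r) ≤ P r + K := hstep j (le_of_max_le_left hj) r hr
        _ ≤ ε * r + _ + ε * (2 ^ j * ℓ) := add_le_add (ih r (by omega)) hK
        _ = ε * ↑(2 ^ j * ℓ + r) + _ := by push_cast; ring
  rw [Metric.tendsto_atTop]
  intro ε hε
  obtain ⟨C, hC⟩ := hlin (ε / 2) (half_pos hε)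
  obtain ⟨N₀, hN₀⟩ := exists_nat_gt (2 * C / ε)
  refine ⟨N₀ + 1, fun N hN => ?_⟩
  have hNpos : (0 : ℝ) < N := by exact_mod_cast (Nat.le_add_left 1 N₀).trans hN
  have hCN : 2 * C < ε * N := by
    rw [div_lt_iff₀ hε] at hN₀
    have : (N₀ : ℝ) + 1 ≤ N := by exact_mod_cast hN
    nlinarith
  rw [Real.dist_eq, sub_zero, abs_of_nonneg (div_nonneg (hP N) hNpos.le), div_lt_iff₀ hNpos]
  linarith [hC N]

/-- `c` is chosen so that `a i + b i - 2 ^ (i + 1) * c` is `2`-periodic. -/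
theorem exists_abs_sub_le_of_mirror_recursion {a b p q : ℕ → ℝ}
    (ha : ∀ i, a (i + 1) = a i + b i + p i) (hb : ∀ i, b (i + 1) = a i + b i + q i)
    (hp : Periodic p 2) (hq : Periodic q 2) :
    ∃ B, ∀ i, |a (i + 1) - 2 ^ (i + 1) * ((a 2 + b 2 - a 0 - b 0) / 6)| ≤ B ∧
      |b (i + 1) - 2 ^ (i + 1) * ((a 2 + b 2 - a 0 - b 0) / 6)| ≤ B := by
  set c := (a 2 + b 2 - a 0 - b 0) / 6
  have hy : Periodic (fun i => a i + b i - 2 ^ (i + 1) * c) 2 := by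
    intro i
    induction i with
    | zero => simp only [c]; ring
    | succ i ih =>
      simp only at ih ⊢
      linear_combination ha (i + 2) + hb (i + 2) - ha i - hb i + 2 * ih + hp i + hq i
  obtain ⟨Ba, hBa⟩ := (hy.add hp).exists_abs_le two_pos
  obtain ⟨Bb, hBb⟩ := (hy.add hq).exists_abs_le two_pos
  refine ⟨max Ba Bb, fun i => ⟨le_trans (le_of_eq ?_) ((hBa i).trans (le_max_left _ _)),
    le_trans (le_of_eq ?_) ((hBb i).trans (le_max_right _ _))⟩⟩
  · simp only [Pi.add_apply, ha]; ring_nf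
  · simp only [Pi.add_apply, hb]; ring_nf

def IsMirror (M ℓ : ℕ) (τ : ℕ → ℕ) : Prop :=
  ∀ n : ℕ, ∀ i < 2 ^ n * ℓ, τ (2 ^ n * ℓ + i) = M - τ i

namespace IsMirror

variable {M ℓ : ℕ} {τ : ℕ → ℕ}

theorem le (hτ : IsMirror M ℓ τ) (hℓ : 0 < ℓ) (h₀ : ∀ i < ℓ, τ i ≤ M) (i : ℕ) : τ i ≤ M := by
  rcases lt_or_ge i ℓ with hi | hi
  · exact h₀ i hi
  obtain ⟨j, -, hj, hij⟩ := exists_two_pow_mul_le_lt (J := 0) hℓ (by simpa using hi)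
  obtain ⟨r, rfl⟩ := Nat.exists_eq_add_of_le hj
  rw [hτ j r (by rw [pow_succ] at hij; linarith)]
  exact Nat.sub_le M _

theorem map_range_add (hτ : IsMirror M ℓ τ) {j r : ℕ} (hr : r ≤ 2 ^ j * ℓ) :
    (List.range (2 ^ j * ℓ + r)).map τ =
      (List.range (2 ^ j * ℓ)).map τ ++ ((List.range r).map τ).map (M - ·) := by
  rw [List.range_add, List.map_append, List.map_map, List.map_map]
  congr 1
  exact List.map_congr_left fun i hi => hτ j i ((List.mem_range.1 hi).trans_le hr)

theorem map_range_two_pow_succ (hτ : IsMirror M ℓ τ) (j : ℕ) :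
    (List.range (2 ^ (j + 1) * ℓ)).map τ =
      (List.range (2 ^ j * ℓ)).map τ ++ ((List.range (2 ^ j * ℓ)).map τ).map (M - ·) := by
  rw [show 2 ^ (j + 1) * ℓ = 2 ^ j * ℓ + 2 ^ j * ℓ by ring, hτ.map_range_add le_rfl]

theorem rtake_map_range_two_pow_succ (hτ : IsMirror M ℓ τ) {j k : ℕ} (hk : k ≤ 2 ^ j * ℓ) :
    ((List.range (2 ^ (j + 1) * ℓ)).map τ).rtake k =
      (((List.range (2 ^ j * ℓ)).map τ).rtake k).map (M - ·) := by
  rw [hτ.map_range_two_pow_succ]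
  simp only [List.rtake, List.length_append, List.length_map, List.length_range, List.map_drop]
  rw [show 2 ^ j * ℓ + 2 ^ j * ℓ - k = ((List.range (2 ^ j * ℓ)).map τ).length + (2 ^ j * ℓ - k)
    by simp; omega, List.drop_length_add_append]

theorem rtake_map_range_two_pow_add_two (hτ : IsMirror M ℓ τ) (hτM : ∀ i, τ i ≤ M) {j k : ℕ}
    (hk : k ≤ 2 ^ j * ℓ) :
    ((List.range (2 ^ (j + 2) * ℓ)).map τ).rtake k = ((List.range (2 ^ j * ℓ)).map τ).rtake k := by
  have hk' : k ≤ 2 ^ (j + 1) * ℓ := hk.trans (by gcongr <;> omega)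
  rw [hτ.rtake_map_range_two_pow_succ hk', hτ.rtake_map_range_two_pow_succ hk, map_sub_map_sub]
  have hT : ∀ x ∈ (List.range (2 ^ j * ℓ)).map τ, x ≤ M := List.forall_mem_map.2 fun i _ => hτM i
  exact fun x hx => hT x (List.mem_of_mem_drop hx)

theorem countOcc_map_range_two_pow_succ (hτ : IsMirror M ℓ τ) (hτM : ∀ i, τ i ≤ M)
    {d : List ℕ} (hd : d ≠ []) (hdM : ∀ x ∈ d, x ≤ M) {j : ℕ} (hk : d.length - 1 ≤ 2 ^ j * ℓ) :
    countOcc d ((List.range (2 ^ (j + 1) * ℓ)).map τ) =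
      countOcc d ((List.range (2 ^ j * ℓ)).map τ) +
        countOcc (d.map (M - ·)) ((List.range (2 ^ j * ℓ)).map τ) +
        countOcc d (((List.range (2 ^ j * ℓ)).map τ).rtake (d.length - 1) ++
          ((List.range (d.length - 1)).map τ).map (M - ·)) := by
  rw [hτ.map_range_two_pow_succ, countOcc_append hd, countOcc_map_sub hdM
    (List.forall_mem_map.2 fun i _ => hτM i), ← List.map_take, ← List.map_take, List.take_range,
    min_eq_left hk]

theorem exists_countOcc_map_range_add (hτ : IsMirror M ℓ τ) (hτM : ∀ i, τ i ≤ M)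
    {d : List ℕ} (hd : d ≠ []) (hdM : ∀ x ∈ d, x ≤ M) {j r : ℕ} (hr : r ≤ 2 ^ j * ℓ) :
    ∃ c ≤ d.length - 1, countOcc d ((List.range (2 ^ j * ℓ + r)).map τ) =
      countOcc d ((List.range (2 ^ j * ℓ)).map τ) +
        countOcc (d.map (M - ·)) ((List.range r).map τ) + c := by
  rw [hτ.map_range_add hr, ← countOcc_map_sub hdM (List.forall_mem_map.2 fun i _ => hτM i)]
  exact exists_countOcc_append_eq hd _ _

theorem exists_abs_countOcc_sub_le (hτ : IsMirror M ℓ τ) (hℓ : 0 < ℓ) (hτM : ∀ i, τ i ≤ M)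
    {d : List ℕ} (hd : d ≠ []) (hdM : ∀ x ∈ d, x ≤ M) {m : ℕ} (hm : d.length - 1 ≤ 2 ^ m * ℓ)
    {dens : ℝ} (hdens : dens =
      ((countOcc d ((List.range (2 ^ (m + 2) * ℓ)).map τ) : ℝ)
        + (countOcc (d.map (M - ·)) ((List.range (2 ^ (m + 2) * ℓ)).map τ) : ℝ)
        - (countOcc d ((List.range (2 ^ m * ℓ)).map τ) : ℝ)
        - (countOcc (d.map (M - ·)) ((List.range (2 ^ m * ℓ)).map τ) : ℝ)) / (6 * 2 ^ m * ℓ)) :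
    ∃ B, ∀ j ≥ m + 1,
      |(countOcc d ((List.range (2 ^ j * ℓ)).map τ) : ℝ) - dens * (2 ^ j * ℓ)| ≤ B ∧
      |(countOcc (d.map (M - ·)) ((List.range (2 ^ j * ℓ)).map τ) : ℝ) - dens * (2 ^ j * ℓ)|
        ≤ B := by
  have hd' : d.map (M - ·) ≠ [] := by simpa using hd
  have hdM' : ∀ x ∈ d.map (M - ·), x ≤ M := List.forall_mem_map.2 fun x _ => Nat.sub_le M x
  have hmono : ∀ i, d.length - 1 ≤ 2 ^ (m + i) * ℓ := fun i => hm.trans (by gcongr <;> omega)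
  let W : ℕ → List ℕ := fun i => ((List.range (2 ^ (m + i) * ℓ)).map τ).rtake (d.length - 1) ++
    ((List.range (d.length - 1)).map τ).map (M - ·)
  have hW : Periodic W 2 := fun i => by
    simp only [W, ← Nat.add_assoc, hτ.rtake_map_range_two_pow_add_two hτM (hmono i)]
  obtain ⟨B, hB⟩ := exists_abs_sub_le_of_mirror_recursion
    (a := fun i => (countOcc d ((List.range (2 ^ (m + i) * ℓ)).map τ) : ℝ))
    (b := fun i => (countOcc (d.map (M - ·)) ((List.range (2 ^ (m + i) * ℓ)).map τ) : ℝ))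
    (p := fun i => (countOcc d (W i) : ℝ)) (q := fun i => (countOcc (d.map (M - ·)) (W i) : ℝ))
    (fun i => by
      simp only [← Nat.add_assoc, hτ.countOcc_map_range_two_pow_succ hτM hd hdM (hmono i), W]
      push_cast; ring)
    (fun i => by
      have := hτ.countOcc_map_range_two_pow_succ hτM hd' hdM' (by simpa using hmono i)
      rw [map_sub_map_sub hdM, List.length_map] at this
      simp only [← Nat.add_assoc, this, W]
      push_cast; ring)
    (fun i => by simp only [hW i]) (fun i => by simp only [hW i])
  refine ⟨B, fun j hj => ?_⟩
  obtain ⟨i, rfl⟩ := Nat.exists_eq_add_of_le hj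
  rw [show m + 1 + i = m + (i + 1) by ring]
  have : (ℓ : ℝ) ≠ 0 := by positivity
  convert hB i using 4 <;>
  · simp only [hdens, Nat.add_zero]
    field_simp
    ring

theorem tendsto_countOcc_div (hτ : IsMirror M ℓ τ) (hℓ : 0 < ℓ) (hτM : ∀ i, τ i ≤ M)
    {d : List ℕ} (hd : d ≠ []) (hdM : ∀ x ∈ d, x ≤ M) {dens B : ℝ} {J : ℕ}
    (hB : ∀ j ≥ J,
      |(countOcc d ((List.range (2 ^ j * ℓ)).map τ) : ℝ) - dens * (2 ^ j * ℓ)| ≤ B ∧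
      |(countOcc (d.map (M - ·)) ((List.range (2 ^ j * ℓ)).map τ) : ℝ) - dens * (2 ^ j * ℓ)| ≤ B) :
    Tendsto (fun N : ℕ => (countOcc d ((List.range N).map τ) : ℝ) / N) atTop (𝓝 dens) ∧
      Tendsto (fun N : ℕ => (countOcc (d.map (M - ·)) ((List.range N).map τ) : ℝ) / N) atTop
        (𝓝 dens) := by
  have hd' : d.map (M - ·) ≠ [] := by simpa using hd
  have hdM' : ∀ x ∈ d.map (M - ·), x ≤ M := List.forall_mem_map.2 fun x _ => Nat.sub_le M x
  let err : List ℕ → ℕ → ℝ := fun w N => countOcc w ((List.range N).map τ) - dens * N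
  have hsplit : ∀ w : List ℕ, w ≠ [] → (∀ x ∈ w, x ≤ M) → w.length = d.length →
      ∀ j r, r ≤ 2 ^ j * ℓ →
        |err w (2 ^ j * ℓ + r)| ≤ |err w (2 ^ j * ℓ)| + |err (w.map (M - ·)) r| + d.length := by
    intro w hw hwM hlen j r hr
    obtain ⟨c, hc, heq⟩ := hτ.exists_countOcc_map_range_add hτM hw hwM hr
    have hc' : (c : ℝ) ≤ d.length := by exact_mod_cast (hc.trans (Nat.sub_le _ _)).trans hlen.le
    have herr : err w (2 ^ j * ℓ + r) = err w (2 ^ j * ℓ) + err (w.map (M - ·)) r + c := by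
      simp only [err, heq]; push_cast; ring
    rw [herr]
    linarith [abs_add_three (err w (2 ^ j * ℓ)) (err (w.map (M - ·)) r) c,
      abs_of_nonneg (Nat.cast_nonneg c : (0 : ℝ) ≤ c)]
  let P : ℕ → ℝ := fun N => |err d N| + |err (d.map (M - ·)) N|
  have hstep : ∀ j ≥ J, ∀ r < 2 ^ j * ℓ, P (2 ^ j * ℓ + r) ≤ P r + 2 * (B + d.length) := by
    intro j hj r hr
    have h₁ := hsplit d hd hdM rfl j r hr.le
    have h₂ := hsplit _ hd' hdM' (List.length_map _) j r hr.le
    rw [map_sub_map_sub hdM] at h₂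
    obtain ⟨hB₁, hB₂⟩ := hB j hj
    simp only [P, err, Nat.cast_mul, Nat.cast_pow, Nat.cast_ofNat] at h₁ h₂ hB₁ hB₂ ⊢
    linarith
  have hP := tendsto_div_atTop_of_le_add hℓ (fun N => by positivity) hstep
  have hlim : ∀ w, (∀ N, |err w N| ≤ P N) →
      Tendsto (fun N : ℕ => (countOcc w ((List.range N).map τ) : ℝ) / N) atTop (𝓝 dens) := by
    intro w hw
    rw [tendsto_iff_norm_sub_tendsto_zero]
    refine squeeze_zero' (Eventually.of_forall fun N => norm_nonneg _) ?_ hP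
    filter_upwards [eventually_gt_atTop 0] with N hN
    have hN' : (0 : ℝ) < N := Nat.cast_pos.2 hN
    have : (countOcc w ((List.range N).map τ) : ℝ) / N - dens = err w N / N := by
      field_simp
      ring
    rw [Real.norm_eq_abs, this, abs_div, Nat.abs_cast]
    exact div_le_div_of_nonneg_right (hw N) hN'.le
  exact ⟨hlim d fun N => le_add_of_nonneg_right (abs_nonneg _),
    hlim _ fun N => le_add_of_nonneg_left (abs_nonneg _)⟩

end IsMirror

theorem stmt7_general (M ℓ : ℕ) (hℓ : 1 ≤ ℓ) (τ : ℕ → ℕ)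
    (hτle : ∀ i < ℓ, τ i ≤ M)
    (hrec : ∀ n : ℕ, ∀ i < 2 ^ n * ℓ, τ (2 ^ n * ℓ + i) = M - τ i)
    (δ : List ℕ) (hδ : δ ≠ []) (hδM : ∀ x ∈ δ, x ≤ M)
    (n : ℕ) (hn : δ.length - 1 ≤ 4 ^ n * ℓ) :
    ∃ dens : ℝ,
      Filter.Tendsto (fun m : ℕ =>
        (countOcc δ ((List.range m).map τ) : ℝ) / m) Filter.atTop (nhds dens) ∧
      Filter.Tendsto (fun m : ℕ =>
        (countOcc (δ.map (fun x => M - x)) ((List.range m).map τ) : ℝ) / m)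
        Filter.atTop (nhds dens) ∧
      dens = ((countOcc δ ((List.range (4 ^ (n + 1) * ℓ)).map τ) : ℝ)
            + (countOcc (δ.map (fun x => M - x)) ((List.range (4 ^ (n + 1) * ℓ)).map τ) : ℝ)
            - (countOcc δ ((List.range (4 ^ n * ℓ)).map τ) : ℝ)
            - (countOcc (δ.map (fun x => M - x)) ((List.range (4 ^ n * ℓ)).map τ) : ℝ))
          / (6 * 4 ^ n * ℓ) := by
  have hτM : ∀ i, τ i ≤ M := IsMirror.le hrec hℓ hτle
  have h4 : ∀ k, (4 : ℕ) ^ k = 2 ^ (2 * k) := fun k => by rw [pow_mul]; norm_num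
  have h4R : (4 : ℝ) ^ n = 2 ^ (2 * n) := by rw [pow_mul]; norm_num
  simp only [h4, h4R, Nat.mul_succ] at hn ⊢
  obtain ⟨B, hB⟩ := IsMirror.exists_abs_countOcc_sub_le hrec hℓ hτM hδ hδM hn rfl
  obtain ⟨h₁, h₂⟩ := IsMirror.tendsto_countOcc_div hrec hℓ hτM hδ hδM hB
  exact ⟨_, h₁, h₂, rfl⟩

/-- Theorem on frequencies of blocks in mirror sequences: the mirror sequence `τ` is
generated from an initial word `τ_0 ⋯ τ_{ℓ-1} ∈ {0,…,M}^ℓ` by the recursion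
`τ_{2^n ℓ + i} = M - τ_i` (`0 ≤ i < 2^n ℓ`).  Every nonempty word `δ` over `{0,…,M}`
has a density `d(δ)` in `τ`, it equals the density of the reflected word `δ̄`, and for
every `n` with `4^n ℓ ≥ |δ| - 1` it is given by `(P - N)/(6·4^n·ℓ)`. -/
theorem stmt7 (M ℓ : ℕ) (hM : 1 ≤ M) (hℓ : 1 ≤ ℓ) (τ : ℕ → ℕ)
    (hτle : ∀ i < ℓ, τ i ≤ M)
    (hrec : ∀ n : ℕ, ∀ i < 2 ^ n * ℓ, τ (2 ^ n * ℓ + i) = M - τ i)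
    (δ : List ℕ) (hδ : δ ≠ []) (hδM : ∀ x ∈ δ, x ≤ M)
    (n : ℕ) (hn : δ.length - 1 ≤ 4 ^ n * ℓ) :
    ∃ dens : ℝ,
      Filter.Tendsto (fun m : ℕ =>
        (countOcc δ ((List.range m).map τ) : ℝ) / m) Filter.atTop (nhds dens) ∧
      Filter.Tendsto (fun m : ℕ =>
        (countOcc (δ.map (fun x => M - x)) ((List.range m).map τ) : ℝ) / m)
        Filter.atTop (nhds dens) ∧
      dens = ((countOcc δ ((List.range (4 ^ (n + 1) * ℓ)).map τ) : ℝ)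
            + (countOcc (δ.map (fun x => M - x)) ((List.range (4 ^ (n + 1) * ℓ)).map τ) : ℝ)
            - (countOcc δ ((List.range (4 ^ n * ℓ)).map τ) : ℝ)
            - (countOcc (δ.map (fun x => M - x)) ((List.range (4 ^ n * ℓ)).map τ) : ℝ))
          / (6 * 4 ^ n * ℓ) :=
  stmt7_general M ℓ hℓ τ hτle hrec δ hδ hδM n hn
end

section
/- Let m be a positive integer and m+1 < q < q_c := (m+2+√(m(m+4)))/2. Then there exists δ > 0 such that D_{m,m}(q) ∩ (log(m+1)/log q − δ, log(m+1)/log q) = ∅; that is, no t ∈ U_{m,m}(q) gives a Hausdorff dimension of Γ_{q,m} ∩ (Γ_{q,m} + t) strictly between log(m+1)/log q − δ and log(m+1)/log q. -/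
open scoped ENNReal

/-!
Let `a` be the unique expansion of `t`. A point of `Γ ∩ (Γ + t)` has digits `c i` with
`c i - a i ∈ {0,…,m}`, so only `m` digits are available wherever `a i ≠ 0`.

If `a` is eventually zero, `Γ ∩ (Γ + t)` contains a scaled copy of `Γ`, so its dimension is
`dimH Γ`: either this is at least `log(m+1)/log q`, or the gap below `log(m+1)/log q` is already
there. Otherwise, uniqueness forces the tail after any digit `a p < m` to be below
`1 - m/(q-1)`, and symmetrically. For `q < q_c` a nonzero digit followed by `K` zeros (`K` large,
depending on `q` and `m` only) would push the tail above this threshold, and the threshold then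
propagates backwards (as `q ≤ 2m+1`), forcing every earlier digit to be `±m`. So once a zero digit
has occurred, every window of `K` digits contains a nonzero one, and counting cylinders bounds the
dimension by `log((m+1)^(K-1) m) / log(q^K) < log(m+1)/log q`.
-/

open Filter Set MeasureTheory Topology

lemma abs_natCast_le {n m : ℕ} (h : n ≤ m) : |(n : ℝ)| ≤ m := by
  rw [Nat.abs_cast]
  exact_mod_cast h

noncomputable def digitVal (q : ℝ) (c : ℕ → ℝ) : ℝ := ∑' i, c i / q ^ (i + 1)

section digitVal

variable {q C : ℝ} {c c' : ℕ → ℝ}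

lemma summable_digit (hq : 1 < q) (hc : ∀ i, |c i| ≤ C) :
    Summable fun i => c i / q ^ (i + 1) := by
  have hq0 : 0 < q := by linarith
  have hgeo : Summable fun i : ℕ => C * (1 / q) ^ i :=
    (summable_geometric_of_lt_one (by positivity) ((div_lt_one hq0).2 hq)).mul_left _
  refine Summable.of_norm_bounded hgeo fun i => ?_
  rw [Real.norm_eq_abs, abs_div, abs_of_pos (pow_pos hq0 _), one_div_pow, ← div_eq_mul_one_div]
  calc |c i| / q ^ (i + 1) ≤ C / q ^ (i + 1) := by gcongr; exact hc i
    _ ≤ C / q ^ i := by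
      gcongr
      · exact (abs_nonneg _).trans (hc 0)
      · exact hq.le
      · omega

lemma digitVal_const (hq : 1 < q) (C : ℝ) : digitVal q (fun _ => C) = C / (q - 1) := by
  have hq0 : 0 < q := by linarith
  have hq1 : q - 1 ≠ 0 := by linarith
  have h : ∑' i : ℕ, (1 / q) ^ i = (1 - 1 / q)⁻¹ :=
    tsum_geometric_of_lt_one (by positivity) ((div_lt_one hq0).2 hq)
  calc digitVal q (fun _ => C) = ∑' i : ℕ, C / q * (1 / q) ^ i := by
        refine tsum_congr fun i => ?_
        rw [pow_succ', one_div_pow]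
        field_simp
    _ = C / (q - 1) := by rw [tsum_mul_left, h]; field_simp

lemma abs_digitVal_le (hq : 1 < q) (hc : ∀ i, |c i| ≤ C) : |digitVal q c| ≤ C / (q - 1) := by
  have hq0 : 0 < q := by linarith
  have hC : |C| ≤ C := (abs_of_nonneg ((abs_nonneg _).trans (hc 0))).le
  have hsum := (summable_digit hq (c := fun _ => C) fun _ => hC).hasSum
  rw [← digitVal_const hq C]
  refine tsum_of_norm_bounded (f := fun i => c i / q ^ (i + 1)) hsum fun i => ?_
  rw [Real.norm_eq_abs, abs_div, abs_of_pos (pow_pos hq0 _)]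
  exact div_le_div_of_nonneg_right (hc i) (by positivity)

lemma digitVal_eq_sum_add (hq : 1 < q) (hc : ∀ i, |c i| ≤ C) (n : ℕ) :
    digitVal q c = ∑ i ∈ Finset.range n, c i / q ^ (i + 1)
      + digitVal q (fun i => c (n + i)) / q ^ n := by
  have hq0 : q ≠ 0 := by positivity
  rw [digitVal, ← (summable_digit hq hc).sum_add_tsum_nat_add n, digitVal, ← tsum_div_const]
  congr 2 with i
  rw [add_comm i n, add_assoc, pow_add, div_div, mul_comm]

lemma digitVal_shift_succ (hq : 1 < q) (hc : ∀ i, |c i| ≤ C) (p : ℕ) :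
    digitVal q (fun i => c (p + i)) = (c p + digitVal q (fun i => c (p + 1 + i))) / q := by
  rw [digitVal_eq_sum_add hq (fun i => hc (p + i)) 1]
  simp [add_div, add_assoc, add_comm 1]

lemma digitVal_neg : digitVal q (fun i => -c i) = -digitVal q c := by
  simp only [digitVal, neg_div, tsum_neg]

lemma digitVal_sub (hq : 1 < q) (hc : ∀ i, |c i| ≤ C) (hc' : ∀ i, |c' i| ≤ C) :
    digitVal q (fun i => c i - c' i) = digitVal q c - digitVal q c' := by
  simp only [digitVal, sub_div]
  exact (summable_digit hq hc).tsum_sub (summable_digit hq hc')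

lemma digitVal_nonneg (hq : 0 < q) (hc : ∀ i, 0 ≤ c i) : 0 ≤ digitVal q c :=
  tsum_nonneg fun i => div_nonneg (hc i) (by positivity)

end digitVal

section greedy

variable {q : ℝ} {M : ℕ} {y : ℝ}

noncomputable def greedyDigit (q : ℝ) (M : ℕ) (y : ℝ) : ℕ := min M ⌊q * y⌋₊

noncomputable def greedyMap (q : ℝ) (M : ℕ) (y : ℝ) : ℝ := q * y - greedyDigit q M y

lemma greedyMap_mem_Icc (hq : 1 < q) (hM : q ≤ M + 1) (hy : y ∈ Icc 0 (M / (q - 1))) :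
    greedyMap q M y ∈ Icc 0 (M / (q - 1)) := by
  have hq1 : 0 < q - 1 := by linarith
  have hqy : 0 ≤ q * y := mul_nonneg (by linarith) hy.1
  rcases le_total ⌊q * y⌋₊ M with h | h
  · have hd : (greedyDigit q M y : ℝ) = ⌊q * y⌋₊ := by rw [greedyDigit, min_eq_right h]
    have h1 : (1 : ℝ) ≤ M / (q - 1) := by rw [le_div_iff₀ hq1]; linarith
    rw [greedyMap, hd]
    exact ⟨by linarith [Nat.floor_le hqy], by linarith [Nat.lt_floor_add_one (q * y)]⟩
  · have hd : (greedyDigit q M y : ℝ) = M := by rw [greedyDigit, min_eq_left h]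
    have h1 : (M : ℝ) ≤ q * y := le_trans (by exact_mod_cast h) (Nat.floor_le hqy)
    have h2 : q * y ≤ q * (M / (q - 1)) := by gcongr; exact hy.2
    have h3 : q * (M / (q - 1)) - M = M / (q - 1) := by field_simp; ring
    rw [greedyMap, hd]
    exact ⟨by linarith, by linarith⟩

lemma eq_sum_greedyDigit_add (hq : q ≠ 0) (y : ℝ) (n : ℕ) :
    y = ∑ k ∈ Finset.range n, (greedyDigit q M ((greedyMap q M)^[k] y) : ℝ) / q ^ (k + 1)
      + (greedyMap q M)^[n] y / q ^ n := by
  induction n with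
  | zero => simp
  | succ n ih =>
    rw [Finset.sum_range_succ, Function.iterate_succ_apply', greedyMap]
    conv_lhs => rw [ih]
    field_simp
    ring

lemma exists_digitVal_eq_of_mem_Icc (hq : 1 < q) (hM : q ≤ M + 1)
    (hy : y ∈ Icc 0 (M / (q - 1))) :
    ∃ c : ℕ → ℕ, (∀ i, c i ≤ M) ∧ digitVal q (fun i => c i) = y := by
  set T := greedyMap q M
  have hT : ∀ n, T^[n] y ∈ Icc 0 (M / (q - 1)) := by
    intro n
    induction n with
    | zero => exact hy
    | succ n ih => rw [Function.iterate_succ_apply']; exact greedyMap_mem_Icc hq hM ih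
  refine ⟨fun k => greedyDigit q M (T^[k] y), fun _ => min_le_left _ _, ?_⟩
  have hc : ∀ k, |(greedyDigit q M (T^[k] y) : ℝ)| ≤ M := fun k =>
    abs_natCast_le (min_le_left _ _)
  have hrem : Tendsto (fun n => T^[n] y / q ^ n) atTop (𝓝 0) := by
    refine squeeze_zero_norm (fun n => ?_) (by simpa using (tendsto_pow_atTop_nhds_zero_of_lt_one
      (by positivity) ((div_lt_one (by linarith)).2 hq)).const_mul (M / (q - 1)))
    rw [Real.norm_eq_abs, abs_div, abs_of_nonneg (hT n).1, abs_of_pos (by positivity),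
      ← div_eq_mul_inv]
    gcongr
    exact (hT n).2
  refine tendsto_nhds_unique (summable_digit hq hc).hasSum.tendsto_sum_nat ?_
  have hsum : ∀ n, ∑ k ∈ Finset.range n, (greedyDigit q M (T^[k] y) : ℝ) / q ^ (k + 1)
      = y - T^[n] y / q ^ n := fun n => by
    linarith [eq_sum_greedyDigit_add (M := M) (by positivity : q ≠ 0) y n]
  simp only [hsum]
  simpa using tendsto_const_nhds.sub hrem

lemma exists_intDigits_digitVal_eq {m : ℕ} (hq : 1 < q) (hqm : q ≤ 2 * m + 1) {x : ℝ}
    (hx : |x| ≤ m / (q - 1)) :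
    ∃ b : ℕ → ℤ, (∀ i, -(m : ℤ) ≤ b i ∧ b i ≤ m) ∧ digitVal q (fun i => b i) = x := by
  have hq1 : 0 < q - 1 := by linarith
  have h2m : ((2 * m : ℕ) : ℝ) / (q - 1) = m / (q - 1) + m / (q - 1) := by push_cast; ring
  obtain ⟨c, hc, hcx⟩ := exists_digitVal_eq_of_mem_Icc (M := 2 * m) (y := x + m / (q - 1)) hq
    (by push_cast; linarith) (by rw [h2m]; constructor <;> linarith [abs_le.1 hx])
  refine ⟨fun i => c i - m, fun i => ?_, ?_⟩
  · have := hc i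
    dsimp only
    omega
  have hcC : ∀ i, |(c i : ℝ)| ≤ 2 * m := fun i => by exact_mod_cast abs_natCast_le (hc i)
  push_cast
  rw [digitVal_sub hq hcC (fun _ => by rw [Nat.abs_cast]; linarith),
    hcx, digitVal_const hq]
  ring

end greedy

section uniqueExpansion

variable {q t : ℝ} {m : ℕ} {a : ℕ → ℤ}

lemma abs_intCast_le_of_mem {k : ℤ} (h : -(m : ℤ) ≤ k ∧ k ≤ m) : |(k : ℝ)| ≤ m :=
  abs_le.2 ⟨by exact_mod_cast h.1, by exact_mod_cast h.2⟩

lemma IsExpansion.eq_digitVal (ha : IsExpansion q m m a t) : t = digitVal q (fun i => a i) :=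
  ha.2

lemma IsExpansion.neg (ha : IsExpansion q m m a t) : IsExpansion q m m (fun i => -a i) (-t) := by
  refine ⟨fun i => ⟨by linarith [(ha.1 i).2], by linarith [(ha.1 i).1]⟩, ?_⟩
  rw [ha.2]
  push_cast
  exact digitVal_neg.symm

lemma IsExpansion.unique_neg (huniq : ∀ b, IsExpansion q m m b t → b = a) :
    ∀ b, IsExpansion q m m b (-t) → b = fun i => -a i := by
  intro b hb
  have h := huniq _ (by simpa using hb.neg)
  funext i
  simp [← h]

/-- If the tail were larger, `a p + 1` followed by an expansion of the tail minus `1` would be a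
second expansion of `t`. -/
lemma IsExpansion.tail_lt_of_lt (hq : 1 < q) (hqm : q ≤ 2 * m + 1) (ha : IsExpansion q m m a t)
    (huniq : ∀ b, IsExpansion q m m b t → b = a) {p : ℕ} (hp : a p < m) :
    digitVal q (fun i => (a (p + 1 + i) : ℝ)) < 1 - m / (q - 1) := by
  have hq1 : 0 < q - 1 := by linarith
  have hd : ∀ i, |(a i : ℝ)| ≤ m := fun i => abs_intCast_le_of_mem (ha.1 i)
  set x := digitVal q (fun i => (a (p + 1 + i) : ℝ))
  by_contra! hx
  have hxle : x ≤ m / (q - 1) := (abs_le.1 (abs_digitVal_le hq fun i => hd (p + 1 + i))).2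
  obtain ⟨b', hb', hb'x⟩ := exists_intDigits_digitVal_eq (x := x - 1) hq hqm
    (abs_le.2 ⟨by linarith, by linarith⟩)
  set b : ℕ → ℤ := fun i => if i < p then a i else if i = p then a p + 1 else b' (i - (p + 1))
  have hbd : ∀ i, -(m : ℤ) ≤ b i ∧ b i ≤ m := fun i => by
    simp only [b]
    split_ifs
    exacts [ha.1 i, ⟨by linarith [(ha.1 p).1], by omega⟩, hb' _]
  have hbtail : (fun i => (b (p + 1 + i) : ℝ)) = fun i => (b' i : ℝ) := by
    funext i
    simp only [b, if_neg (show ¬p + 1 + i < p by omega), if_neg (show p + 1 + i ≠ p by omega),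
      show p + 1 + i - (p + 1) = i by omega]
  have hbt : t = digitVal q (fun i => (b i : ℝ)) := by
    have hsplit := digitVal_eq_sum_add hq (fun i => abs_intCast_le_of_mem (hbd i)) (p + 1)
    have hpre : ∑ i ∈ Finset.range p, (b i : ℝ) / q ^ (i + 1)
        = ∑ i ∈ Finset.range p, (a i : ℝ) / q ^ (i + 1) :=
      Finset.sum_congr rfl fun i hi => by rw [show b i = a i from if_pos (Finset.mem_range.1 hi)]
    rw [ha.eq_digitVal, digitVal_eq_sum_add hq hd (p + 1), hsplit, hbtail, hb'x,
      Finset.sum_range_succ, Finset.sum_range_succ, hpre]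
    simp only [b, lt_irrefl, if_false, if_true]
    push_cast
    ring
  have := congrFun (huniq b ⟨hbd, hbt⟩) p
  simp [b] at this

lemma digits_eq_of_lt_tail (hq : 1 < q) (hqm : q ≤ 2 * m + 1)
    (hd : ∀ i, -(m : ℤ) ≤ a i ∧ a i ≤ m)
    (hbelow : ∀ p, a p < m → digitVal q (fun i => (a (p + 1 + i) : ℝ)) < 1 - m / (q - 1))
    {p : ℕ} (hp : 1 - m / (q - 1) < digitVal q (fun i => (a (p + 1 + i) : ℝ))) :
    ∀ i ≤ p, a i = m := by
  have hq1 : 0 < q - 1 := by linarith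
  induction p with
  | zero =>
    intro i hi
    obtain rfl : i = 0 := by omega
    by_contra h
    exact (hbelow 0 (lt_of_le_of_ne (hd 0).2 h)).not_gt hp
  | succ p ih =>
    have hap : a (p + 1) = m := by
      by_contra h
      exact (hbelow _ (lt_of_le_of_ne (hd _).2 h)).not_gt hp
    have hprev : 1 - m / (q - 1) < digitVal q (fun i => (a (p + 1 + i) : ℝ)) := by
      rw [digitVal_shift_succ hq (fun i => abs_intCast_le_of_mem (hd i)), hap,
        lt_div_iff₀ (by linarith)]
      have : (1 - m / (q - 1)) * q ≤ m + (1 - m / (q - 1)) := by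
        rw [← sub_nonneg]
        have e : m + (1 - m / (q - 1)) - (1 - m / (q - 1)) * q = (2 * m + 1 - q) := by
          field_simp; ring
        rw [e]; linarith
      push_cast
      linarith
    intro i hi
    rcases Nat.lt_or_eq_of_le hi with hi | rfl
    exacts [ih hprev i (by omega), hap]

lemma exists_ne_zero_near_of_pos (hm : 1 ≤ m) (hq : 1 < q) (hqm : q ≤ 2 * m + 1) {K : ℕ}
    (hK : m / (q - 1) / q ^ K < 1 - q * (1 - m / (q - 1)))
    (hd : ∀ i, -(m : ℤ) ≤ a i ∧ a i ≤ m)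
    (hbelow : ∀ p, a p < m → digitVal q (fun i => (a (p + 1 + i) : ℝ)) < 1 - m / (q - 1))
    {J n : ℕ} (hJn : J < n) (haJ : a J = 0) (han : 0 < a n) :
    ∃ i, n < i ∧ i ≤ n + K ∧ a i ≠ 0 := by
  have hq0 : 0 < q := by linarith
  have hd' : ∀ i, |(a i : ℝ)| ≤ m := fun i => abs_intCast_le_of_mem (hd i)
  by_contra! hzero
  have hsmall : |digitVal q (fun i => (a (n + 1 + i) : ℝ))| ≤ m / (q - 1) / q ^ K := by
    rw [digitVal_eq_sum_add hq (fun i => hd' (n + 1 + i)) K,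
      Finset.sum_eq_zero fun i hi => by
        rw [hzero _ (by omega) (by simp at hi; omega), Int.cast_zero, zero_div],
      zero_add, abs_div, abs_of_pos (pow_pos hq0 K)]
    gcongr
    exact abs_digitVal_le hq fun i => hd' _
  have htail : 1 - m / (q - 1) < digitVal q (fun i => (a (n - 1 + 1 + i) : ℝ)) := by
    rw [Nat.sub_add_cancel (by omega), digitVal_shift_succ hq hd', lt_div_iff₀ hq0]
    have : (1 : ℝ) ≤ a n := by exact_mod_cast han
    linarith [(abs_le.1 hsmall).1]
  have := digits_eq_of_lt_tail hq hqm hd hbelow htail J (by omega)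
  omega

lemma IsExpansion.exists_ne_zero_near (hm : 1 ≤ m) (hq : 1 < q) (hqm : q ≤ 2 * m + 1) {K : ℕ}
    (hK : m / (q - 1) / q ^ K < 1 - q * (1 - m / (q - 1)))
    (ha : IsExpansion q m m a t) (huniq : ∀ b, IsExpansion q m m b t → b = a)
    {J n : ℕ} (hJn : J < n) (haJ : a J = 0) (han : a n ≠ 0) :
    ∃ i, n < i ∧ i ≤ n + K ∧ a i ≠ 0 := by
  rcases han.lt_or_gt with hneg | hpos
  · obtain ⟨i, hni, hiK, hi⟩ := exists_ne_zero_near_of_pos hm hq hqm hK ha.neg.1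
      (fun p hp => by simpa [digitVal_neg] using
        ha.neg.tail_lt_of_lt hq hqm (IsExpansion.unique_neg huniq) hp)
      hJn (by simp [haJ]) (by omega)
    exact ⟨i, hni, hiK, by simpa using hi⟩
  · exact exists_ne_zero_near_of_pos hm hq hqm hK ha.1
      (fun p hp => ha.tail_lt_of_lt hq hqm huniq hp) hJn haJ hpos

end uniqueExpansion

lemma exists_mem_window_of_gaps {P : ℕ → Prop} {K n₀ : ℕ} (h₀ : P n₀)
    (hnext : ∀ n ≥ n₀, P n → ∃ i, n < i ∧ i ≤ n + K ∧ P i) :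
    ∀ x ≥ n₀, ∃ i, x ≤ i ∧ i < x + K ∧ P i := by
  intro x hx
  induction x, hx using Nat.le_induction with
  | base =>
    obtain ⟨i, hi, hiK, -⟩ := hnext n₀ le_rfl h₀
    exact ⟨n₀, le_rfl, by omega, h₀⟩
  | succ x hx ih =>
    obtain ⟨i, hxi, hiK, hi⟩ := ih
    rcases hxi.lt_or_eq with hxi | rfl
    · exact ⟨i, hxi, by omega, hi⟩
    · obtain ⟨j, hij, hjK, hj⟩ := hnext x hx hi
      exact ⟨j, hij, by omega, hj⟩

section covers

variable {X : Type*} [EMetricSpace X] [MeasurableSpace X] [BorelSpace X] {A : Set X}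
  {Q R B D : ℝ}

lemma hausdorffMeasure_eq_zero_of_covers (hQ : 1 < Q) (hR : 0 ≤ R) (hD : 0 ≤ D) {d : ℝ}
    (hd : 0 ≤ d)
    (hRQ : R < Q ^ d)
    (hcover : ∀ k : ℕ, ∃ T : Finset (Set X), (T.card : ℝ) ≤ B * R ^ k ∧
      (∀ s ∈ T, Metric.ediam s ≤ ENNReal.ofReal (D / Q ^ k)) ∧ A ⊆ ⋃ s ∈ T, s) :
    μH[d] A = 0 := by
  choose T hcard hdiam hA using hcover
  have hQd : 0 < Q ^ d := Real.rpow_pos_of_pos (by linarith) d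
  have hbound : ∀ k, ∑ s : T k, Metric.ediam (s : Set X) ^ d
      ≤ ENNReal.ofReal (B * D ^ d * (R / Q ^ d) ^ k) := fun k => by
    calc ∑ s : T k, Metric.ediam (s : Set X) ^ d
        ≤ ∑ _s : T k, ENNReal.ofReal (D / Q ^ k) ^ d :=
          Finset.sum_le_sum fun s _ => by gcongr; exact hdiam k s s.2
      _ = ENNReal.ofReal ((T k).card * (D / Q ^ k) ^ d) := by
          rw [Finset.sum_const, Finset.card_univ, Fintype.card_coe, nsmul_eq_mul,
            ENNReal.ofReal_mul (by positivity), ENNReal.ofReal_natCast,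
            ENNReal.ofReal_rpow_of_nonneg (by positivity) hd]
      _ ≤ ENNReal.ofReal (B * R ^ k * (D / Q ^ k) ^ d) := by gcongr; exact hcard k
      _ = ENNReal.ofReal (B * D ^ d * (R / Q ^ d) ^ k) := by
          rw [Real.div_rpow hD (by positivity), ← Real.rpow_natCast Q k,
            ← Real.rpow_mul (by positivity), mul_comm (k : ℝ), Real.rpow_mul (by positivity),
            Real.rpow_natCast, div_pow]
          ring_nf
  have hlim : Tendsto (fun k : ℕ => ENNReal.ofReal (B * D ^ d * (R / Q ^ d) ^ k)) atTop (𝓝 0) := by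
    simpa using ENNReal.tendsto_ofReal ((tendsto_pow_atTop_nhds_zero_of_lt_one
      (by positivity)
      ((div_lt_one hQd).2 hRQ)).const_mul (B * D ^ d))
  have hr : Tendsto (fun k : ℕ => ENNReal.ofReal (D / Q ^ k)) atTop (𝓝 0) := by
    simpa [div_eq_mul_inv] using ENNReal.tendsto_ofReal ((tendsto_pow_atTop_nhds_zero_of_lt_one
      (by positivity) (inv_lt_one_of_one_lt₀ hQ)).const_mul D)
  refine le_antisymm ?_ bot_le
  calc μH[d] A ≤ liminf (fun k => ∑ s : T k, Metric.ediam (s : Set X) ^ d) atTop :=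
        Measure.hausdorffMeasure_le_liminf_sum _ A _ hr (fun k (s : T k) => (s : Set X))
          (Eventually.of_forall fun k s => hdiam k s s.2)
          (Eventually.of_forall fun k => by simpa [Set.iUnion_subtype] using hA k)
    _ ≤ liminf (fun k : ℕ => ENNReal.ofReal (B * D ^ d * (R / Q ^ d) ^ k)) atTop :=
        liminf_le_liminf (Eventually.of_forall hbound)
    _ = 0 := hlim.liminf_eq

theorem dimH_le_logb_of_covers (hQ : 1 < Q) (hR : 0 < R) (hD : 0 ≤ D)
    (hcover : ∀ k : ℕ, ∃ T : Finset (Set X), (T.card : ℝ) ≤ B * R ^ k ∧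
      (∀ s ∈ T, Metric.ediam s ≤ ENNReal.ofReal (D / Q ^ k)) ∧ A ⊆ ⋃ s ∈ T, s) :
    dimH A ≤ ENNReal.ofReal (Real.logb Q R) := by
  refine dimH_le fun d hd => ?_
  by_contra! hlt
  rw [← ENNReal.ofReal_coe_nnreal] at hlt
  have hRQ : R < Q ^ (d : ℝ) :=
    (Real.logb_lt_iff_lt_rpow hQ hR).1 (ENNReal.ofReal_lt_ofReal_iff'.1 hlt).1
  rw [hausdorffMeasure_eq_zero_of_covers hQ hR.le hD (NNReal.coe_nonneg d) hRQ hcover] at hd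
  exact ENNReal.zero_ne_top hd

end covers

def restrictedDigitSet (q : ℝ) (S : ℕ → Finset ℕ) : Set ℝ :=
  {x | ∃ c : ℕ → ℕ, (∀ i, c i ∈ S i) ∧ x = digitVal q (fun i => c i)}

/-- Contains every `digitVal q c` with digits `c i ≤ m` whose first `n` digits form `w`. -/
def digitCylinder (q : ℝ) (m : ℕ) {n : ℕ} (w : Fin n → ℕ) : Set ℝ :=
  Icc (∑ j, (w j : ℝ) / q ^ ((j : ℕ) + 1))
    (∑ j, (w j : ℝ) / q ^ ((j : ℕ) + 1) + m / (q - 1) / q ^ n)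

section restrictedDigitSet

variable {q : ℝ} {m : ℕ} {S : ℕ → Finset ℕ}

lemma restrictedDigitSet_subset_biUnion_digitCylinder (hq : 1 < q)
    (hS : ∀ i, S i ⊆ Finset.range (m + 1)) (n : ℕ) :
    restrictedDigitSet q S ⊆
      ⋃ w ∈ Fintype.piFinset (fun j : Fin n => S j), digitCylinder q m w := by
  rintro x ⟨c, hc, rfl⟩
  have hq0 : 0 < q := by linarith
  have hcm : ∀ i, |(c i : ℝ)| ≤ m := fun i =>
    abs_natCast_le (Finset.mem_range_succ_iff.1 (hS i (hc i)))
  simp only [mem_iUnion]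
  refine ⟨fun j => c j, Fintype.mem_piFinset.2 fun j => hc j, ?_⟩
  rw [digitCylinder, Fin.sum_univ_eq_sum_range (fun j => (c j : ℝ) / q ^ (j + 1)),
    digitVal_eq_sum_add hq hcm n]
  have h0 : 0 ≤ digitVal q (fun i => (c (n + i) : ℝ)) / q ^ n :=
    div_nonneg (digitVal_nonneg hq0 fun i => Nat.cast_nonneg _) (by positivity)
  have h1 : digitVal q (fun i => (c (n + i) : ℝ)) / q ^ n ≤ m / (q - 1) / q ^ n := by
    gcongr
    exact (abs_le.1 (abs_digitVal_le hq fun i => hcm (n + i))).2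
  constructor <;> linarith

lemma prod_card_le_of_exists_card_le (hS : ∀ i, S i ⊆ Finset.range (m + 1)) {x K : ℕ}
    (h : ∃ i, x ≤ i ∧ i < x + K ∧ (S i).card ≤ m) :
    ∏ l ∈ Finset.range K, (S (x + l)).card ≤ (m + 1) ^ (K - 1) * m := by
  obtain ⟨i, hxi, hiK, hi⟩ := h
  have hl : i - x ∈ Finset.range K := Finset.mem_range.2 (by omega)
  rw [← Finset.mul_prod_erase _ _ hl, mul_comm, Nat.add_sub_cancel' hxi]
  refine Nat.mul_le_mul ?_ hi
  calc ∏ l ∈ (Finset.range K).erase (i - x), (S (x + l)).card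
      ≤ (m + 1) ^ ((Finset.range K).erase (i - x)).card :=
        Finset.prod_le_pow_card _ _ _ fun l _ => by
          simpa using Finset.card_le_card (hS (x + l))
    _ = (m + 1) ^ (K - 1) := by rw [Finset.card_erase_of_mem hl, Finset.card_range]

lemma prod_card_le_of_windows (hS : ∀ i, S i ⊆ Finset.range (m + 1)) {n₀ K : ℕ}
    (hwin : ∀ x ≥ n₀, ∃ i, x ≤ i ∧ i < x + K ∧ (S i).card ≤ m) (k : ℕ) :
    ∏ i ∈ Finset.range (n₀ + k * K), (S i).card ≤ (m + 1) ^ n₀ * ((m + 1) ^ (K - 1) * m) ^ k := by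
  induction k with
  | zero =>
    simpa using Finset.prod_le_pow_card (Finset.range n₀) (fun i => (S i).card) (m + 1)
      fun i _ => by simpa using Finset.card_le_card (hS i)
  | succ k ih =>
    rw [show n₀ + (k + 1) * K = n₀ + k * K + K by ring, Finset.prod_range_add, pow_succ,
      ← mul_assoc]
    exact Nat.mul_le_mul ih (prod_card_le_of_exists_card_le hS (hwin _ (by omega)))

theorem dimH_restrictedDigitSet_le (hm : 1 ≤ m) (hq : 1 < q)
    (hS : ∀ i, S i ⊆ Finset.range (m + 1)) {n₀ K : ℕ}
    (hwin : ∀ x ≥ n₀, ∃ i, x ≤ i ∧ i < x + K ∧ (S i).card ≤ m) :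
    dimH (restrictedDigitSet q S) ≤
      ENNReal.ofReal (Real.logb (q ^ K) (((m : ℝ) + 1) ^ (K - 1) * m)) := by
  classical
  have hK : 0 < K := by obtain ⟨i, h1, h2, -⟩ := hwin n₀ le_rfl; omega
  have hq0 : 0 < q := by linarith
  have hq1 : 0 < q - 1 := by linarith
  refine dimH_le_logb_of_covers (B := ((m : ℝ) + 1) ^ n₀) (D := m / (q - 1) / q ^ n₀)
    (one_lt_pow₀ hq hK.ne') (by positivity) (by positivity) fun k => ?_
  set n := n₀ + k * K
  refine ⟨(Fintype.piFinset fun j : Fin n => S j).image (digitCylinder q m), ?_, ?_, ?_⟩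
  · refine (Nat.cast_le.2 Finset.card_image_le).trans ?_
    rw [Fintype.card_piFinset, Fin.prod_univ_eq_prod_range (fun i => (S i).card)]
    exact_mod_cast prod_card_le_of_windows hS hwin k
  · simp only [Finset.mem_image]
    rintro _ ⟨w, -, rfl⟩
    rw [digitCylinder, Real.ediam_Icc, add_sub_cancel_left, pow_add, mul_comm k, pow_mul, ← div_div]
  · simpa only [Finset.set_biUnion_finset_image] using
      restrictedDigitSet_subset_biUnion_digitCylinder hq hS n

end restrictedDigitSet

def admissibleDigits (m : ℕ) (k : ℤ) : Finset ℕ :=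
  (Finset.range (m + 1)).filter fun c => k ≤ c ∧ (c : ℤ) ≤ m + k

lemma card_admissibleDigits_le {m : ℕ} {k : ℤ} (hk : k ≠ 0) : (admissibleDigits m k).card ≤ m := by
  suffices admissibleDigits m k ⊂ Finset.range (m + 1) by
    simpa [Nat.lt_succ_iff] using Finset.card_lt_card this
  refine Finset.filter_ssubset.2 ?_
  rcases hk.lt_or_gt with hk | hk
  · exact ⟨m, by simp, by omega⟩
  · exact ⟨0, by simp, by omega⟩

section intersection

variable {q t : ℝ} {m : ℕ} {a : ℕ → ℤ}

lemma inter_subset_restrictedDigitSet (hq : 1 < q) (huniq : ∀ b, IsExpansion q m m b t → b = a) :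
    Gamma q m ∩ ((fun x => x + t) '' Gamma q m) ⊆
      restrictedDigitSet q fun i => admissibleDigits m (a i) := by
  rintro x ⟨⟨c, hc, rfl⟩, y, ⟨c', hc', rfl⟩, hxy⟩
  have hexp : IsExpansion q m m (fun i => c i - c' i) t := by
    refine ⟨fun i => ⟨?_, ?_⟩, ?_⟩
    · have := hc' i; dsimp only; omega
    · have := hc i; dsimp only; omega
    change digitVal q _ + t = digitVal q _ at hxy
    change t = digitVal q _
    push_cast
    rw [digitVal_sub hq (fun i => abs_natCast_le (hc i)) (fun i => abs_natCast_le (hc' i))]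
    linarith
  have hd := congrFun (huniq _ hexp)
  refine ⟨c, fun i => ?_, rfl⟩
  simp only [admissibleDigits, Finset.mem_filter, Finset.mem_range]
  have := hd i
  have := hc i
  have := hc' i
  omega

lemma prefix_add_mem_Gamma (hq : 1 < q) {w : ℕ → ℕ} (hw : ∀ j, w j ≤ m) {x : ℝ}
    (hx : x ∈ Gamma q m) (N : ℕ) :
    ∑ j ∈ Finset.range N, (w j : ℝ) / q ^ (j + 1) + x / q ^ N ∈ Gamma q m := by
  obtain ⟨e, he, rfl⟩ := hx
  set c : ℕ → ℕ := fun i => if i < N then w i else e (i - N)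
  have hc : ∀ i, c i ≤ m := fun i => by simp only [c]; split_ifs <;> simp [hw, he]
  refine ⟨c, hc, ?_⟩
  change _ = digitVal q _
  rw [digitVal_eq_sum_add hq (fun i => abs_natCast_le (hc i)) N]
  congr 1
  · exact Finset.sum_congr rfl fun i hi => by simp [c, Finset.mem_range.1 hi]
  · congr 1
    change digitVal q _ = _
    congr 1 with i
    simp [c]

lemma dimH_Gamma_le_inter (hq : 1 < q) (ha : IsExpansion q m m a t)
    (hfin : ∀ᶠ i in atTop, a i = 0) :
    dimH (Gamma q m) ≤ dimH (Gamma q m ∩ ((fun x => x + t) '' Gamma q m)) := by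
  obtain ⟨N, hN⟩ := eventually_atTop.1 hfin
  have hqN : 0 < q ^ N := pow_pos (by linarith) N
  set pos := ∑ j ∈ Finset.range N, ((a j).toNat : ℝ) / q ^ (j + 1)
  set neg := ∑ j ∈ Finset.range N, ((-a j).toNat : ℝ) / q ^ (j + 1)
  have ht : t = pos - neg := by
    rw [ha.eq_digitVal, digitVal_eq_sum_add hq (fun i => abs_intCast_le_of_mem (ha.1 i)) N,
      ← Finset.sum_sub_distrib]
    have htail : digitVal q (fun i => (a (N + i) : ℝ)) = 0 := by
      simp [digitVal, hN _ (Nat.le_add_right N _)]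
    rw [htail, zero_div, add_zero]
    refine Finset.sum_congr rfl fun j _ => ?_
    rw [← sub_div]
    congr 1
    exact_mod_cast (Int.toNat_sub_toNat_neg (a j)).symm
  have hg : AntilipschitzWith (q ^ N).toNNReal fun x => pos + x / q ^ N :=
    AntilipschitzWith.of_le_mul_dist fun x y => by
      rw [Real.coe_toNNReal _ hqN.le, Real.dist_eq, Real.dist_eq,
        show pos + x / q ^ N - (pos + y / q ^ N) = (x - y) / q ^ N by ring, abs_div,
        abs_of_pos hqN, mul_div_cancel₀ _ hqN.ne']
  have hmaps : (fun x => pos + x / q ^ N) '' Gamma q m ⊆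
      Gamma q m ∩ ((fun x => x + t) '' Gamma q m) := by
    rintro _ ⟨x, hx, rfl⟩
    refine ⟨prefix_add_mem_Gamma hq (fun j => ?_) hx N,
      neg + x / q ^ N, prefix_add_mem_Gamma hq (fun j => ?_) hx N, by rw [ht]; ring⟩
    · have := (ha.1 j).2; omega
    · have := (ha.1 j).1; omega
  exact (hg.le_dimH_image _).trans (dimH_mono hmaps)

theorem dimH_inter_le_of_frequently_ne_zero (hm : 1 ≤ m) (hq : 1 < q) (hqm : q ≤ 2 * m + 1)
    {K : ℕ} (hK₀ : 0 < K) (hK : m / (q - 1) / q ^ K < 1 - q * (1 - m / (q - 1)))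
    (ha : IsExpansion q m m a t) (huniq : ∀ b, IsExpansion q m m b t → b = a)
    (hfreq : ∃ᶠ i in atTop, a i ≠ 0) :
    dimH (Gamma q m ∩ ((fun x => x + t) '' Gamma q m)) ≤
      ENNReal.ofReal (Real.logb (q ^ K) (((m : ℝ) + 1) ^ (K - 1) * m)) := by
  obtain ⟨n₀, hwin⟩ : ∃ n₀, ∀ x ≥ n₀, ∃ i, x ≤ i ∧ i < x + K ∧ a i ≠ 0 := by
    by_cases hzero : ∃ J, a J = 0
    · obtain ⟨J, hJ⟩ := hzero
      obtain ⟨n₀, hn₀, hne⟩ := frequently_atTop.1 hfreq (J + 1)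
      exact ⟨n₀, exists_mem_window_of_gaps hne fun n hn han =>
        ha.exists_ne_zero_near hm hq hqm hK huniq (by omega) hJ han⟩
    · exact ⟨0, fun x _ => ⟨x, le_rfl, by omega, not_exists.1 hzero x⟩⟩
  calc dimH (Gamma q m ∩ ((fun x => x + t) '' Gamma q m))
      ≤ dimH (restrictedDigitSet q fun i => admissibleDigits m (a i)) :=
        dimH_mono (inter_subset_restrictedDigitSet hq huniq)
    _ ≤ _ := dimH_restrictedDigitSet_le hm hq (fun i => Finset.filter_subset _ _) fun x hx =>
        (hwin x hx).imp fun i hi => ⟨hi.1, hi.2.1, card_admissibleDigits_le hi.2.2⟩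

end intersection

lemma exists_div_pow_lt {q C ε : ℝ} (hq : 1 < q) (hε : 0 < ε) : ∃ K : ℕ, 0 < K ∧ C / q ^ K < ε := by
  have hlim : Tendsto (fun K : ℕ => C / q ^ K) atTop (𝓝 0) := by
    simpa [div_eq_mul_inv] using (tendsto_pow_atTop_nhds_zero_of_lt_one (by positivity)
      (inv_lt_one_of_one_lt₀ hq)).const_mul C
  exact ((eventually_gt_atTop 0).and (hlim.eventually (gt_mem_nhds hε))).exists

section criticalBase

variable {q : ℝ} {m : ℕ}

/-- `q_c` is the larger root of `q ^ 2 - (m + 2) * q + 1`, and the conclusion is a rewriting of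
`q ^ 2 - (m + 2) * q + 1 < 0`. -/
lemma mul_one_sub_div_lt_one_of_lt_critical (hq1 : (m : ℝ) + 1 < q)
    (hq2 : q < ((m : ℝ) + 2 + Real.sqrt (m * (m + 4))) / 2) :
    q * (1 - m / (q - 1)) < 1 := by
  have hq : 0 < q - 1 := by linarith [(Nat.cast_nonneg m : (0 : ℝ) ≤ m)]
  have hs : Real.sqrt (m * (m + 4)) ^ 2 = m * (m + 4) := Real.sq_sqrt (by positivity)
  have hlt : (2 * q - (m + 2)) ^ 2 < Real.sqrt (m * (m + 4)) ^ 2 :=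
    pow_lt_pow_left₀ (by linarith) (by linarith) two_ne_zero
  rw [mul_one_sub, mul_div_assoc', sub_lt_iff_lt_add, ← sub_lt_iff_lt_add', lt_div_iff₀ hq]
  nlinarith

lemma le_two_mul_add_one_of_mul_one_sub_div_lt_one (hm : 1 ≤ m) (hq1 : (m : ℝ) + 1 < q)
    (hcrit : q * (1 - m / (q - 1)) < 1) : q ≤ 2 * m + 1 := by
  have hm' : (1 : ℝ) ≤ m := by exact_mod_cast hm
  have hq : 0 < q - 1 := by linarith
  by_contra! h
  have : m / (q - 1) < 1 / 2 := by rw [div_lt_iff₀ hq]; linarith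
  nlinarith

lemma logb_pow_lt_logb (hq : 1 < q) (hm : 1 ≤ m) {K : ℕ} (hK : 0 < K) :
    Real.logb (q ^ K) (((m : ℝ) + 1) ^ (K - 1) * m) < Real.logb q (m + 1) := by
  have hm' : (1 : ℝ) ≤ m := by exact_mod_cast hm
  have hlogq := Real.log_pos hq
  have hR : ((m : ℝ) + 1) ^ (K - 1) * m < ((m : ℝ) + 1) ^ K := by
    calc ((m : ℝ) + 1) ^ (K - 1) * m < ((m : ℝ) + 1) ^ (K - 1) * (m + 1) := by gcongr; linarith
      _ = ((m : ℝ) + 1) ^ K := by rw [← pow_succ, Nat.sub_add_cancel hK]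
  have hlog := Real.log_lt_log (by positivity) hR
  rw [Real.log_pow] at hlog
  rw [Real.logb, Real.logb, Real.log_pow, div_lt_div_iff₀ (by positivity) hlogq]
  calc Real.log (((m : ℝ) + 1) ^ (K - 1) * m) * Real.log q
      < K * Real.log ((m : ℝ) + 1) * Real.log q := mul_lt_mul_of_pos_right hlog hlogq
    _ = Real.log ((m : ℝ) + 1) * (K * Real.log q) := by ring

end criticalBase

theorem stmt9 (m : ℕ) (hm : 1 ≤ m) (q : ℝ) (hq1 : (m : ℝ) + 1 < q)
    (hq2 : q < ((m : ℝ) + 2 + Real.sqrt (m * (m + 4))) / 2) :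
    ∃ δ : ℝ, 0 < δ ∧
      dimSet q m m ∩
        Set.Ioo (ENNReal.ofReal (Real.log (m + 1) / Real.log q - δ))
          (ENNReal.ofReal (Real.log (m + 1) / Real.log q)) = ∅ := by
  have hq : 1 < q := by linarith [(Nat.cast_nonneg m : (0 : ℝ) ≤ m)]
  have hcrit := mul_one_sub_div_lt_one_of_lt_critical hq1 hq2
  have hqm := le_two_mul_add_one_of_mul_one_sub_div_lt_one hm hq1 hcrit
  obtain ⟨K, hK₀, hK⟩ := exists_div_pow_lt (C := m / (q - 1)) hq (sub_pos.2 hcrit)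
  rw [Real.log_div_log]
  by_cases hΓ : dimH (Gamma q m) < ENNReal.ofReal (Real.logb q (m + 1))
  · refine ⟨Real.logb q (m + 1) - (dimH (Gamma q m)).toReal,
      sub_pos.2 (ENNReal.toReal_lt_of_lt_ofReal hΓ), eq_empty_of_forall_notMem ?_⟩
    rintro _ ⟨⟨t, -, rfl⟩, hlo, -⟩
    rw [sub_sub_cancel, ENNReal.ofReal_toReal (hΓ.trans ENNReal.ofReal_lt_top).ne] at hlo
    exact hlo.not_ge (dimH_mono inter_subset_left)
  · refine ⟨_, sub_pos.2 (logb_pow_lt_logb hq hm hK₀), eq_empty_of_forall_notMem ?_⟩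
    rintro _ ⟨⟨t, ⟨a, ha, huniq⟩, rfl⟩, hlo, hhi⟩
    by_cases hfin : ∀ᶠ i in atTop, a i = 0
    · exact hΓ ((dimH_Gamma_le_inter hq ha hfin).trans_lt hhi)
    · rw [sub_sub_cancel] at hlo
      exact hlo.not_ge (dimH_inter_le_of_frequently_ne_zero hm hq hqm hK₀ hK ha huniq
        (not_eventually.1 hfin))
end

section
/- Let (τ_i)_{i≥0} be the Thue–Morse sequence. For every positive integer n, the number of indices i with 1 ≤ i ≤ 2^n such that τ_i = τ_{i−1} equals 2^n · (−Σ_{i=1}^n (−1/2)^i). -/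
/-!
Let `c N` count the indices `1 ≤ i ≤ N` with `τ i = τ (i - 1)`. Among the indices up to `2N`, an odd
`i = 2k + 1` never counts, since `τ i = 1 - τ k` and `τ (i - 1) = τ k`, while an even `i = 2k` counts
exactly when `k` does not. Hence `c (2N) + c N = N`, and from `c 1 = 1` we get
`c (2 ^ n) = (2 ^ n - (-1) ^ n) / 3`, which is the geometric sum in the statement.
-/

open Finset

namespace ThueMorse

variable {τ : ℕ → ℕ}

theorem le_one (hτ0 : τ 0 = 0) (hτe : ∀ i, τ (2 * i) = τ i)
    (hτo : ∀ i, τ (2 * i + 1) = 1 - τ i) (i : ℕ) : τ i ≤ 1 := by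
  induction i using Nat.strong_induction_on with
  | _ i ih =>
    obtain ⟨k, rfl | rfl⟩ := Nat.even_or_odd' i
    · rcases k.eq_zero_or_pos with rfl | hk
      · simp [hτ0]
      · rw [hτe]
        exact ih k (by omega)
    · rw [hτo]
      omega

section Agreements

variable (hle : ∀ i, τ i ≤ 1) (hτe : ∀ i, τ (2 * i) = τ i)
  (hτo : ∀ i, τ (2 * i + 1) = 1 - τ i)
include hle hτe hτo

theorem apply_two_mul_add_one_ne (k : ℕ) : τ (2 * k + 1) ≠ τ (2 * k + 1 - 1) := by
  rw [Nat.add_sub_cancel, hτo, hτe]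
  have := hle k
  omega

theorem apply_two_mul_eq_iff {k : ℕ} (hk : 1 ≤ k) :
    τ (2 * k) = τ (2 * k - 1) ↔ τ k ≠ τ (k - 1) := by
  rw [show 2 * k - 1 = 2 * (k - 1) + 1 by omega, hτe, hτo]
  have := hle k
  have := hle (k - 1)
  omega

theorem filter_agree_two_mul (N : ℕ) :
    {i ∈ Icc 1 (2 * N) | τ i = τ (i - 1)} = {k ∈ Icc 1 N | τ k ≠ τ (k - 1)}.image (2 * ·) := by
  ext i
  simp only [mem_filter, mem_image, mem_Icc]
  constructor
  · rintro ⟨⟨hi1, hiN⟩, hagree⟩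
    obtain ⟨k, rfl | rfl⟩ := Nat.even_or_odd' i
    · exact ⟨k, ⟨⟨by omega, by omega⟩, (apply_two_mul_eq_iff hle hτe hτo (by omega)).1 hagree⟩, rfl⟩
    · exact absurd hagree (apply_two_mul_add_one_ne hle hτe hτo k)
  · rintro ⟨k, ⟨⟨hk1, hkN⟩, hne⟩, rfl⟩
    exact ⟨⟨by omega, by omega⟩, (apply_two_mul_eq_iff hle hτe hτo hk1).2 hne⟩

theorem card_filter_agree_two_mul_add (N : ℕ) :
    #{i ∈ Icc 1 (2 * N) | τ i = τ (i - 1)} + #{i ∈ Icc 1 N | τ i = τ (i - 1)} = N := by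
  rw [filter_agree_two_mul hle hτe hτo, card_image_of_injective _ (fun a b h => by omega),
    add_comm, card_filter_add_card_filter_not, Nat.card_Icc, Nat.add_sub_cancel]

end Agreements

theorem card_filter_agree_two_pow (hτ0 : τ 0 = 0) (hτe : ∀ i, τ (2 * i) = τ i)
    (hτo : ∀ i, τ (2 * i + 1) = 1 - τ i) (n : ℕ) :
    (#{i ∈ Icc 1 (2 ^ n) | τ i = τ (i - 1)} : ℝ) = (2 ^ n - (-1) ^ n) / 3 := by
  induction n with
  | zero =>
    have h1 : τ 1 = 1 := by simpa [hτ0] using hτo 0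
    simp [h1, hτ0]
  | succ n ih =>
    have hsum := card_filter_agree_two_mul_add (le_one hτ0 hτe hτo) hτe hτo (2 ^ n)
    rw [← pow_succ'] at hsum
    have hsumℝ : (#{i ∈ Icc 1 (2 ^ (n + 1)) | τ i = τ (i - 1)} : ℝ)
        + #{i ∈ Icc 1 (2 ^ n) | τ i = τ (i - 1)} = 2 ^ n := by exact_mod_cast hsum
    rw [ih] at hsumℝ
    rw [pow_succ (2 : ℝ), pow_succ (-1 : ℝ)]
    linarith

end ThueMorse

theorem two_pow_mul_neg_sum_neg_half_pow (n : ℕ) :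
    (2 : ℝ) ^ n * (-∑ i ∈ Icc 1 n, (-(1 : ℝ) / 2) ^ i) = (2 ^ n - (-1) ^ n) / 3 := by
  induction n with
  | zero => simp
  | succ n ih =>
    have hpow : (2 : ℝ) ^ (n + 1) * (-(1 : ℝ) / 2) ^ (n + 1) = (-1) ^ (n + 1) := by
      rw [← mul_pow]
      norm_num
    rw [sum_Icc_succ_top (by omega)]
    linear_combination 2 * ih - hpow

theorem stmt16_general (τ : ℕ → ℕ)
    (hτ0 : τ 0 = 0) (hτe : ∀ i, τ (2 * i) = τ i) (hτo : ∀ i, τ (2 * i + 1) = 1 - τ i)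
    (n : ℕ) :
    (((Finset.Icc 1 (2 ^ n)).filter (fun i => τ i = τ (i - 1))).card : ℝ) =
      2 ^ n * (-∑ i ∈ Finset.Icc 1 n, (-(1 : ℝ) / 2) ^ i) := by
  rw [ThueMorse.card_filter_agree_two_pow hτ0 hτe hτo, two_pow_mul_neg_sum_neg_half_pow]

/-- For the Thue–Morse sequence `τ` and every `n ≥ 1`, the number of indices
`1 ≤ i ≤ 2^n` with `τ_i = τ_{i-1}` equals `2^n · (-∑_{i=1}^n (-1/2)^i)`. -/
theorem stmt16 (τ : ℕ → ℕ)
    (hτ0 : τ 0 = 0) (hτe : ∀ i, τ (2 * i) = τ i) (hτo : ∀ i, τ (2 * i + 1) = 1 - τ i)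
    (n : ℕ) (hn : 1 ≤ n) :
    (((Finset.Icc 1 (2 ^ n)).filter (fun i => τ i = τ (i - 1))).card : ℝ) =
      2 ^ n * (-∑ i ∈ Finset.Icc 1 n, (-(1 : ℝ) / 2) ^ i) :=
  stmt16_general τ hτ0 hτe hτo n
end

section
/- Let (τ_i)_{i≥0} be the Thue–Morse sequence. For each j ∈ {−1, 0, 1}, the density of the value j in the sequence (τ_i − τ_{i−1})_{i≥1} exists and equals 1/3; that is, lim_{n→∞} #{1 ≤ i ≤ n : τ_i − τ_{i−1} = j}/n = 1/3. -/
/-!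
Let `z n` count the repeats `τ i = τ (i - 1)` with `1 ≤ i ≤ n`. There is never a repeat at an odd
position `2m + 1`, and there is one at `2m + 2` exactly when there is none at `m + 1`; hence
`z n + z (n / 2) = n / 2`. So `z n - n / 3` changes by at most `1 / 3` in absolute value when `n`
is halved, and is `O(log n)`. As `τ` takes values in `{0, 1}`, the numbers of steps `+1` and `-1`
add up to `n - z n` and differ by `τ n ∈ {0, 1}`, so each of them is also `n / 3 + O(log n)`.
-/

open Finset Filter Topology Asymptotics

theorem isLittleO_natLog_add_one (b : ℕ) :
    (fun n : ℕ => (Nat.log b n : ℝ) + 1) =o[atTop] fun n : ℕ => (n : ℝ) := by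
  have hlog : (fun n : ℕ => Real.log n) =o[atTop] fun n : ℕ => (n : ℝ) :=
    Real.isLittleO_log_id_atTop.comp_tendsto tendsto_natCast_atTop_atTop
  have hone : (fun _ : ℕ => (1 : ℝ)) =o[atTop] fun n : ℕ => (n : ℝ) :=
    (isLittleO_const_id_atTop (1 : ℝ)).comp_tendsto tendsto_natCast_atTop_atTop
  refine IsLittleO.add (IsBigO.trans_isLittleO ?_ hlog) hone
  refine IsBigO.of_bound (Real.log b)⁻¹ (Eventually.of_forall fun n => ?_)
  rw [Real.norm_natCast, Real.norm_eq_abs, abs_of_nonneg (Real.log_natCast_nonneg n),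
    inv_mul_eq_div]
  exact Real.natLog_le_logb n b

theorem tendsto_div_of_sub_mul_isLittleO {f : ℕ → ℝ} {a : ℝ}
    (h : (fun n => f n - a * n) =o[atTop] fun n : ℕ => (n : ℝ)) :
    Tendsto (fun n => f n / n) atTop (𝓝 a) := by
  have := (h.tendsto_div_nhds_zero).add_const a
  rw [zero_add] at this
  refine this.congr' ?_
  filter_upwards [eventually_ne_atTop 0] with n hn
  field_simp
  ring

theorem tendsto_div_of_abs_sub_mul_le_natLog {f : ℕ → ℝ} {a : ℝ} (b : ℕ)
    (h : ∀ n, |f n - a * n| ≤ Nat.log b n + 1) :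
    Tendsto (fun n => f n / n) atTop (𝓝 a) :=
  tendsto_div_of_sub_mul_isLittleO <|
    (IsBigO.of_bound' (Eventually.of_forall fun n => (h n).trans (le_abs_self _))).trans_isLittleO
      (isLittleO_natLog_add_one b)

theorem abs_le_mul_natLog_of_abs_le_div_add {e : ℕ → ℝ} {b : ℕ} {C : ℝ} (hb : 1 < b)
    (h0 : e 0 = 0) (h : ∀ n, |e n| ≤ |e (n / b)| + C) (n : ℕ) :
    |e n| ≤ C * (Nat.log b n + 1) := by
  have hC : 0 ≤ C := by simpa [h0] using h 0
  induction n using Nat.strong_induction_on with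
  | _ n ih =>
    rcases lt_or_ge n b with hn | hn
    · have := h n
      rw [Nat.div_eq_of_lt hn, h0, abs_zero, zero_add] at this
      rw [Nat.log_of_lt hn]
      simpa using this
    · have hlt : n / b < n := Nat.div_lt_self (by omega) hb
      calc |e n| ≤ |e (n / b)| + C := h n
        _ ≤ C * (Nat.log b (n / b) + 1) + C := by gcongr; exact ih _ hlt
        _ = C * (Nat.log b n + 1) := by
          rw [Nat.log_of_one_lt_of_le hb hn]; push_cast; ring

namespace ThueMorse

variable {τ : ℕ → ℕ}

theorem le_one_s17 (h0 : τ 0 = 0) (he : ∀ i, τ (2 * i) = τ i) (ho : ∀ i, τ (2 * i + 1) = 1 - τ i)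
    (i : ℕ) : τ i ≤ 1 := by
  induction i using Nat.strong_induction_on with
  | _ i ih =>
    rcases Nat.even_or_odd' i with ⟨k, rfl | rfl⟩
    · rcases Nat.eq_zero_or_pos k with rfl | hk
      · simp [h0]
      · rw [he]; exact ih k (by omega)
    · rw [ho]; omega

variable (τ) in
def diffCount (j : ℤ) (n : ℕ) : ℕ :=
  #{i ∈ Icc 1 n | (τ i : ℤ) - τ (i - 1) = j}

@[simp]
theorem diffCount_zero (j : ℤ) : diffCount τ j 0 = 0 := by simp [diffCount]

theorem diffCount_succ (j : ℤ) (n : ℕ) :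
    diffCount τ j (n + 1) = diffCount τ j n + if (τ (n + 1) : ℤ) - τ n = j then 1 else 0 := by
  simp only [diffCount, card_filter]
  rw [sum_Icc_succ_top (by omega), Nat.add_sub_cancel]

section

variable (h1 : ∀ i, τ i ≤ 1)
include h1

theorem diffCount_add_diffCount_add_diffCount (n : ℕ) :
    diffCount τ 1 n + diffCount τ 0 n + diffCount τ (-1) n = n := by
  induction n with
  | zero => simp
  | succ n ih =>
    have := h1 n; have := h1 (n + 1)
    rcases (by omega : (τ (n + 1) : ℤ) - τ n = 1 ∨ (τ (n + 1) : ℤ) - τ n = 0 ∨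
      (τ (n + 1) : ℤ) - τ n = -1) with h | h | h <;>
    simp only [diffCount_succ, h] <;> norm_num <;> omega

theorem diffCount_one_sub_diffCount_neg_one (n : ℕ) :
    (diffCount τ 1 n : ℤ) - diffCount τ (-1) n = τ n - τ 0 := by
  induction n with
  | zero => simp
  | succ n ih =>
    have := h1 n; have := h1 (n + 1)
    rcases (by omega : (τ (n + 1) : ℤ) - τ n = 1 ∨ (τ (n + 1) : ℤ) - τ n = 0 ∨
      (τ (n + 1) : ℤ) - τ n = -1) with h | h | h <;>
    simp only [diffCount_succ, h] <;> norm_num <;> omega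

end

theorem diffCount_zero_two_mul_add_one (he : ∀ i, τ (2 * i) = τ i)
    (ho : ∀ i, τ (2 * i + 1) = 1 - τ i) (m : ℕ) :
    diffCount τ 0 (2 * m + 1) = diffCount τ 0 (2 * m) := by
  rw [diffCount_succ, if_neg (by rw [he, ho]; omega), add_zero]

theorem diffCount_zero_two_mul_add_diffCount_zero (h1 : ∀ i, τ i ≤ 1)
    (he : ∀ i, τ (2 * i) = τ i) (ho : ∀ i, τ (2 * i + 1) = 1 - τ i) (m : ℕ) :
    diffCount τ 0 (2 * m) + diffCount τ 0 m = m := by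
  induction m with
  | zero => simp
  | succ m ih =>
    have heven : τ (2 * m + 1 + 1) = τ (m + 1) := he (m + 1)
    rw [show 2 * (m + 1) = 2 * m + 1 + 1 by ring, diffCount_succ,
      diffCount_zero_two_mul_add_one he ho, diffCount_succ, heven, ho]
    have := h1 m; have := h1 (m + 1)
    split_ifs <;> omega

theorem diffCount_zero_add_diffCount_zero_div_two (h1 : ∀ i, τ i ≤ 1)
    (he : ∀ i, τ (2 * i) = τ i) (ho : ∀ i, τ (2 * i + 1) = 1 - τ i) (n : ℕ) :
    diffCount τ 0 n + diffCount τ 0 (n / 2) = n / 2 := by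
  obtain ⟨m, rfl | rfl⟩ := Nat.even_or_odd' n
  · rw [Nat.mul_div_cancel_left m two_pos]
    exact diffCount_zero_two_mul_add_diffCount_zero h1 he ho m
  · rw [diffCount_zero_two_mul_add_one he ho, show (2 * m + 1) / 2 = m by omega]
    exact diffCount_zero_two_mul_add_diffCount_zero h1 he ho m

theorem abs_diffCount_zero_sub_le (h1 : ∀ i, τ i ≤ 1)
    (he : ∀ i, τ (2 * i) = τ i) (ho : ∀ i, τ (2 * i + 1) = 1 - τ i) (n : ℕ) :
    |(diffCount τ 0 n : ℝ) - 1 / 3 * n| ≤ 1 / 3 * (Nat.log 2 n + 1) := by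
  refine abs_le_mul_natLog_of_abs_le_div_add (e := fun n => (diffCount τ 0 n : ℝ) - 1 / 3 * n)
    one_lt_two (by simp) (fun n => ?_) n
  have hz : (diffCount τ 0 n : ℝ) + diffCount τ 0 (n / 2) = (n / 2 : ℕ) := by
    exact_mod_cast diffCount_zero_add_diffCount_zero_div_two h1 he ho n
  have hn : (n : ℝ) = 2 * (n / 2 : ℕ) + (n % 2 : ℕ) := by
    exact_mod_cast (Nat.div_add_mod n 2).symm
  have hr : ((n % 2 : ℕ) : ℝ) ≤ 1 := by exact_mod_cast Nat.le_of_lt_succ (Nat.mod_lt n two_pos)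
  calc |(diffCount τ 0 n : ℝ) - 1 / 3 * n|
      = |-((diffCount τ 0 (n / 2) : ℝ) - 1 / 3 * (n / 2 : ℕ)) + -(1 / 3 * (n % 2 : ℕ))| := by
        congr 1; linarith
    _ ≤ |(diffCount τ 0 (n / 2) : ℝ) - 1 / 3 * (n / 2 : ℕ)| + 1 / 3 := by
        refine (abs_add_le _ _).trans ?_
        rw [abs_neg, abs_neg, abs_of_nonneg (by positivity : (0 : ℝ) ≤ 1 / 3 * (n % 2 : ℕ))]
        linarith

theorem abs_diffCount_sub_le (h0 : τ 0 = 0) (he : ∀ i, τ (2 * i) = τ i)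
    (ho : ∀ i, τ (2 * i + 1) = 1 - τ i) {j : ℤ} (hj : j ∈ ({-1, 0, 1} : Set ℤ)) (n : ℕ) :
    |(diffCount τ j n : ℝ) - 1 / 3 * n| ≤ Nat.log 2 n + 1 := by
  have h1 := le_one_s17 h0 he ho
  have hz := abs_diffCount_zero_sub_le h1 he ho n
  have hsum : (diffCount τ 1 n : ℝ) + diffCount τ 0 n + diffCount τ (-1) n = n := by
    exact_mod_cast diffCount_add_diffCount_add_diffCount h1 n
  have hdiff : (diffCount τ 1 n : ℝ) - diffCount τ (-1) n = τ n := by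
    have := diffCount_one_sub_diffCount_neg_one h1 n
    rw [h0, Nat.cast_zero, sub_zero] at this
    exact_mod_cast this
  have hτ : (τ n : ℝ) ≤ 1 := by exact_mod_cast h1 n
  rw [abs_le] at hz ⊢
  obtain rfl | rfl | rfl := hj
  all_goals constructor <;> linarith [Nat.cast_nonneg (α := ℝ) (τ n)]

end ThueMorse

open ThueMorse in
/-- For the Thue–Morse sequence `τ`, each value `j ∈ {-1, 0, 1}` has density `1/3`
in the difference sequence `(τ_i - τ_{i-1})_{i≥1}`. -/
theorem stmt17 (τ : ℕ → ℕ)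
    (hτ0 : τ 0 = 0) (hτe : ∀ i, τ (2 * i) = τ i) (hτo : ∀ i, τ (2 * i + 1) = 1 - τ i) :
    ∀ j : ℤ, j ∈ ({-1, 0, 1} : Set ℤ) →
      Filter.Tendsto
        (fun n : ℕ =>
          (((Finset.Icc 1 n).filter (fun i => (τ i : ℤ) - (τ (i - 1) : ℤ) = j)).card : ℝ) / n)
        Filter.atTop (nhds (1 / 3)) :=
  fun _ hj => tendsto_div_of_abs_sub_mul_le_natLog 2 (abs_diffCount_sub_le hτ0 hτe hτo hj)
end

section
/- Let m be a positive integer and q ≥ q_c := (m+2+√(m(m+4)))/2. Let (n_i)_{i≥1} be any sequence of positive integers and let (c_i)_{i≥1} ∈ {−m,...,m}^ℕ be the concatenation (1(−1))^{n_1} 0^{n_2} (1(−1))^{n_3} 0^{n_4} ⋯ (alternating n_{2j−1} copies of the block 1(−1) with n_{2j} copies of the digit 0). Then (c_i) is the unique expansion of its value in base q over the alphabet {−m,...,m}: if (d_i) ∈ {−m,...,m}^ℕ satisfies Σ_{i=1}^∞ d_i/q^i = Σ_{i=1}^∞ c_i/q^i, then d_i = c_i for all i. -/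
/-- Block number `k` (k = 0,1,2,…) of the concatenation
`(1(-1))^{n_1} 0^{n_2} (1(-1))^{n_3} 0^{n_4} ⋯`: for even `k` it consists of `n k`
copies of the word `1(-1)`, for odd `k` of `n k` copies of the digit `0`. -/
def tmBlock (n : ℕ → ℕ) (k : ℕ) : List ℤ :=
  if k % 2 = 0 then (List.replicate (n k) ([1, -1] : List ℤ)).flatten
  else List.replicate (n k) (0 : ℤ)

/-- `concatSeq n i` is the `i`-th digit (i = 0,1,2,…) of the infinite concatenation
of the blocks `tmBlock n 0, tmBlock n 1, …`. -/
def concatSeq (n : ℕ → ℕ) (i : ℕ) : ℤ :=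
  (((List.range (i + 1)).map (tmBlock n)).flatten).getD i 0

/-!
Put `x = q⁻¹` and let `T_p(c) = ∑_j c_{p+j} x^{j+1}` be the value of the tail of `c` starting
at position `p`. If two expansions `c`, `d` of the same number agree before position `p`, then
`d_p - c_p = T_{p+1}(c) - T_{p+1}(d)`, so it suffices that this difference always lies in
`(-1, 1)`. For any `d` over `{-m, …, m}` we have `|T_{p+1}(d)| ≤ m x / (1 - x) ≤ 1 - x`, and
the last inequality is exactly `q ≥ q_c`. The tails of `c` are again made of blocks `1(-1)`
and `0` (possibly starting with the `-1` of a cut block) and contain infinitely many `1`s; any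
such sequence has value in `(-x, x)`. The upper bound holds because every `1` is immediately
followed by `-1`, the strict lower bound because a tail not starting with `-1` contains a `1`
and has positive value.
-/

open Filter

/-- The value of the digit sequence `c` in base `q = x⁻¹`. -/
noncomputable def digitSum (x : ℝ) (c : ℕ → ℝ) : ℝ := ∑' j, c j * x ^ (j + 1)

section digitSum

variable {x C : ℝ} {c : ℕ → ℝ}

theorem hasSum_geometric_succ (hx0 : 0 ≤ x) (hx1 : x < 1) :
    HasSum (fun j : ℕ => C * x ^ (j + 1)) (C * x / (1 - x)) := by
  simpa [pow_succ, div_eq_mul_inv, mul_assoc, mul_comm, mul_left_comm]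
    using (hasSum_geometric_of_lt_one hx0 hx1).mul_left (C * x)

theorem norm_digit_le (hx0 : 0 ≤ x) (hc : ∀ i, |c i| ≤ C) (j : ℕ) :
    ‖c j * x ^ (j + 1)‖ ≤ C * x ^ (j + 1) := by
  rw [Real.norm_eq_abs, abs_mul, abs_pow, abs_of_nonneg hx0]
  exact mul_le_mul_of_nonneg_right (hc j) (pow_nonneg hx0 _)

theorem summable_digits (hx0 : 0 ≤ x) (hx1 : x < 1) (hc : ∀ i, |c i| ≤ C) :
    Summable fun j => c j * x ^ (j + 1) :=
  (hasSum_geometric_succ hx0 hx1).summable.of_norm_bounded (norm_digit_le hx0 hc)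

theorem abs_digitSum_le (hx0 : 0 ≤ x) (hx1 : x < 1) (hc : ∀ i, |c i| ≤ C) :
    |digitSum x c| ≤ C * x / (1 - x) :=
  tsum_of_norm_bounded (hasSum_geometric_succ hx0 hx1) (norm_digit_le hx0 hc)

theorem digitSum_eq_head_add (hx0 : 0 ≤ x) (hx1 : x < 1) (hc : ∀ i, |c i| ≤ C) :
    digitSum x c = c 0 * x + x * digitSum x (fun j => c (j + 1)) := by
  rw [digitSum, (summable_digits hx0 hx1 hc).tsum_eq_zero_add, digitSum, ← tsum_mul_left]
  congr 1
  · ring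
  · exact tsum_congr fun j => by ring

end digitSum

theorem head_eq_of_digitSum_eq {x C : ℝ} (hx0 : 0 < x) (hx1 : x < 1) {c d : ℕ → ℤ}
    (hc : ∀ i, |(c i : ℝ)| ≤ C) (hd : ∀ i, |(d i : ℝ)| ≤ C)
    (htail : |digitSum x (fun j => (d (j + 1) : ℝ)) -
      digitSum x (fun j => (c (j + 1) : ℝ))| < 1)
    (h : digitSum x (fun j => (d j : ℝ)) = digitSum x (fun j => (c j : ℝ))) :
    d 0 = c 0 ∧
      digitSum x (fun j => (d (j + 1) : ℝ)) = digitSum x (fun j => (c (j + 1) : ℝ)) := by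
  rw [digitSum_eq_head_add hx0.le hx1 hd, digitSum_eq_head_add hx0.le hx1 hc] at h
  have hdigit : ((d 0 - c 0 : ℤ) : ℝ) =
      digitSum x (fun j => (c (j + 1) : ℝ)) - digitSum x (fun j => (d (j + 1) : ℝ)) := by
    push_cast
    apply mul_right_cancel₀ hx0.ne'
    linear_combination h
  have hzero : d 0 - c 0 = 0 := by
    rw [← Int.abs_lt_one_iff, ← Int.cast_lt (R := ℝ), Int.cast_abs, hdigit, abs_sub_comm]
    simpa using htail
  rw [hzero, Int.cast_zero] at hdigit
  exact ⟨by omega, by linarith⟩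

theorem eq_of_digitSum_eq {x C : ℝ} (hx0 : 0 < x) (hx1 : x < 1) {c d : ℕ → ℤ}
    (hc : ∀ i, |(c i : ℝ)| ≤ C) (hd : ∀ i, |(d i : ℝ)| ≤ C)
    (htail : ∀ p, |digitSum x (fun j => (d (j + 1 + p) : ℝ)) -
      digitSum x (fun j => (c (j + 1 + p) : ℝ))| < 1)
    (h : digitSum x (fun j => (d j : ℝ)) = digitSum x (fun j => (c j : ℝ))) : d = c := by
  have head_eq p := head_eq_of_digitSum_eq (c := fun j => c (j + p)) (d := fun j => d (j + p))
    hx0 hx1 (fun _ => hc _) (fun _ => hd _) (htail p)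
  have hshift : ∀ p,
      digitSum x (fun j => (d (j + p) : ℝ)) = digitSum x (fun j => (c (j + p) : ℝ)) := by
    intro p
    induction p with
    | zero => simpa using h
    | succ p ih => simpa only [add_assoc, add_comm 1 p] using (head_eq p ih).2
  exact funext fun p => by simpa using (head_eq p (hshift p)).1

/-- The tails of `concatSeq n`: concatenations of blocks `1(-1)` and `0`, possibly preceded by
a single `-1`, with infinitely many `1`s. Unlike the sequences `concatSeq n`, this class is
closed under shifts. -/
structure IsBlockSeq (c : ℕ → ℝ) : Prop where
  mem : ∀ i, c i = -1 ∨ c i = 0 ∨ c i = 1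
  one_iff : ∀ i, c i = 1 ↔ c (i + 1) = -1
  frequently_one : ∃ᶠ i in atTop, c i = 1

namespace IsBlockSeq

variable {c : ℕ → ℝ} {x : ℝ}

theorem abs_le_one (h : IsBlockSeq c) (i : ℕ) : |c i| ≤ 1 := by
  rcases h.mem i with hi | hi | hi <;> simp [hi]

theorem shift (h : IsBlockSeq c) (p : ℕ) : IsBlockSeq fun j => c (j + p) where
  mem j := h.mem _
  one_iff j := by simpa only [add_right_comm j 1 p] using h.one_iff (j + p)
  frequently_one := frequently_atTop.2 fun a => by
    obtain ⟨b, hb, hb1⟩ := frequently_atTop.1 h.frequently_one (a + p)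
    exact ⟨b - p, by omega, by rwa [Nat.sub_add_cancel (by omega)]⟩

theorem succ_ne_neg_one (h : IsBlockSeq c) {i : ℕ} (hi : c i ≠ 1) : c (i + 1) ≠ -1 :=
  fun h' => hi ((h.one_iff i).2 h')

theorem abs_digitSum_lt_one (h : IsBlockSeq c) (hx0 : 0 ≤ x) (hx : x < 1 / 2) :
    |digitSum x c| < 1 := by
  calc |digitSum x c| ≤ 1 * x / (1 - x) := abs_digitSum_le hx0 (by linarith) h.abs_le_one
    _ < 1 := by rw [div_lt_one (by linarith)]; linarith

theorem digitSum_eq (h : IsBlockSeq c) (hx0 : 0 ≤ x) (hx : x < 1 / 2) :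
    digitSum x c = c 0 * x + x * digitSum x (fun j => c (j + 1)) :=
  digitSum_eq_head_add hx0 (by linarith) h.abs_le_one

theorem digitSum_eq_of_one (h : IsBlockSeq c) (hx0 : 0 ≤ x) (hx : x < 1 / 2) (h0 : c 0 = 1) :
    digitSum x c = x - x ^ 2 + x ^ 2 * digitSum x (fun j => c (j + 1 + 1)) := by
  rw [h.digitSum_eq hx0 hx, (h.shift 1).digitSum_eq hx0 hx, h0, (h.one_iff 0).1 h0]
  ring

theorem digitSum_lt (h : IsBlockSeq c) (hx0 : 0 < x) (hx : x < 1 / 2) : digitSum x c < x := by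
  have hT := abs_lt.1 ((h.shift 1).abs_digitSum_lt_one hx0.le hx)
  rcases h.mem 0 with h0 | h0 | h0
  · rw [h.digitSum_eq hx0.le hx, h0]; nlinarith
  · rw [h.digitSum_eq hx0.le hx, h0]; nlinarith
  · have hT2 := abs_lt.1 (((h.shift 1).shift 1).abs_digitSum_lt_one hx0.le hx)
    rw [h.digitSum_eq_of_one hx0.le hx h0]
    nlinarith [mul_lt_mul_of_pos_left hT2.2 (pow_pos hx0 2)]

/-- A digit `0` or a block `1(-1)` in front multiplies a lower bound `-x ^ k` by `x` or `x²`. -/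
theorem neg_pow_le_digitSum (h : IsBlockSeq c) (hx0 : 0 < x) (hx : x < 1 / 2) (hc0 : c 0 ≠ -1)
    (k : ℕ) : -x ^ k ≤ digitSum x c := by
  induction k generalizing c with
  | zero => simpa using (abs_lt.1 (h.abs_digitSum_lt_one hx0.le hx)).1.le
  | succ k ih =>
    rcases h.mem 0 with h0 | h0 | h0
    · exact absurd h0 hc0
    · have hT := ih (h.shift 1) (h.succ_ne_neg_one (i := 0) (by rw [h0]; norm_num))
      rw [h.digitSum_eq hx0.le hx, h0, pow_succ]
      nlinarith
    · have hT := ih ((h.shift 1).shift 1)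
        (h.succ_ne_neg_one (i := 1) (by rw [(h.one_iff 0).1 h0]; norm_num))
      have hx2 : 0 ≤ x - x ^ 2 := by nlinarith
      rw [h.digitSum_eq_of_one hx0.le hx h0, pow_succ]
      nlinarith [mul_le_mul_of_nonneg_left hT (sq_nonneg x), mul_nonneg (pow_pos hx0 k).le hx2]

theorem digitSum_nonneg (h : IsBlockSeq c) (hx0 : 0 < x) (hx : x < 1 / 2) (hc0 : c 0 ≠ -1) :
    0 ≤ digitSum x c := by
  simpa using le_of_tendsto' (tendsto_pow_atTop_nhds_zero_of_lt_one hx0.le (by linarith)).neg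
    (h.neg_pow_le_digitSum hx0 hx hc0)

theorem digitSum_pos_of_one (h : IsBlockSeq c) (hx0 : 0 < x) (hx : x < 1 / 2) (h0 : c 0 = 1) :
    0 < digitSum x c := by
  have hT := ((h.shift 1).shift 1).digitSum_nonneg hx0 hx
    (h.succ_ne_neg_one (i := 1) (by rw [(h.one_iff 0).1 h0]; norm_num))
  rw [h.digitSum_eq_of_one hx0.le hx h0]
  nlinarith [mul_nonneg (sq_nonneg x) hT]

theorem digitSum_pos (h : IsBlockSeq c) (hx0 : 0 < x) (hx : x < 1 / 2) (hc0 : c 0 ≠ -1) :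
    0 < digitSum x c := by
  obtain ⟨r, hr⟩ := h.frequently_one.exists
  induction r generalizing c with
  | zero => exact h.digitSum_pos_of_one hx0 hx hr
  | succ r ih =>
    rcases h.mem 0 with h0 | h0 | h0
    · exact absurd h0 hc0
    · have hT := ih (h.shift 1) (h.succ_ne_neg_one (by rw [h0]; norm_num)) hr
      rw [h.digitSum_eq hx0.le hx, h0]
      nlinarith
    · exact h.digitSum_pos_of_one hx0 hx h0

theorem neg_lt_digitSum (h : IsBlockSeq c) (hx0 : 0 < x) (hx : x < 1 / 2) : -x < digitSum x c := by
  by_cases h0 : c 0 = -1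
  · have hT := (h.shift 1).digitSum_pos hx0 hx (h.succ_ne_neg_one (by rw [h0]; norm_num))
    rw [h.digitSum_eq hx0.le hx, h0]
    nlinarith
  · linarith [h.digitSum_nonneg hx0 hx h0]

end IsBlockSeq

theorem IsBlockSeq.eq_of_digitSum_eq {M x : ℝ} (hM : 1 ≤ M) (hx0 : 0 < x) (hx1 : x < 1)
    (hMx : M * x ≤ (1 - x) ^ 2) {c d : ℕ → ℤ} (hc : IsBlockSeq fun i => (c i : ℝ))
    (hd : ∀ i, |(d i : ℝ)| ≤ M)
    (h : digitSum x (fun j => (d j : ℝ)) = digitSum x (fun j => (c j : ℝ))) : d = c := by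
  have hx : x < 1 / 2 := by nlinarith
  have hMx' : M * x / (1 - x) ≤ 1 - x := by
    rw [div_le_iff₀ (by linarith)]; nlinarith
  refine _root_.eq_of_digitSum_eq hx0 hx1 (fun i => (hc.abs_le_one i).trans hM) hd (fun p => ?_) h
  have hdp := abs_le.1 ((abs_digitSum_le (c := fun j => (d (j + 1 + p) : ℝ)) hx0.le hx1
    fun _ => hd _).trans hMx')
  have hcp : IsBlockSeq fun j => (c (j + 1 + p) : ℝ) := by
    simpa only [add_assoc] using hc.shift (1 + p)
  rw [abs_sub_lt_iff]
  constructor <;> linarith [hcp.digitSum_lt hx0 hx, hcp.neg_lt_digitSum hx0 hx]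

inductive IsBlockWord : List ℤ → Prop
  | nil : IsBlockWord []
  | zero {l : List ℤ} : IsBlockWord l → IsBlockWord (0 :: l)
  | pair {l : List ℤ} : IsBlockWord l → IsBlockWord (1 :: -1 :: l)

namespace IsBlockWord

theorem append {l l' : List ℤ} (h : IsBlockWord l) (h' : IsBlockWord l') :
    IsBlockWord (l ++ l') := by
  induction h with
  | nil => exact h'
  | zero _ ih => exact ih.zero
  | pair _ ih => exact ih.pair

theorem flatten {L : List (List ℤ)} (h : ∀ l ∈ L, IsBlockWord l) : IsBlockWord L.flatten := by
  induction L with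
  | nil => exact nil
  | cons l L ih =>
    simp only [List.mem_cons, forall_eq_or_imp] at h
    exact h.1.append (ih h.2)

theorem mem {l : List ℤ} (h : IsBlockWord l) {a : ℤ} (ha : a ∈ l) :
    a = -1 ∨ a = 0 ∨ a = 1 := by
  induction h with
  | nil => simp at ha
  | zero _ ih => simp only [List.mem_cons] at ha; rcases ha with rfl | ha <;> simp_all
  | pair _ ih => simp only [List.mem_cons] at ha; rcases ha with rfl | rfl | ha <;> simp_all

theorem getElem_zero_ne_neg_one {l : List ℤ} (h : IsBlockWord l) (hl : 0 < l.length) :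
    l[0] ≠ -1 := by
  cases h with
  | nil => simp at hl
  | zero | pair => simp

theorem getElem_eq_one_iff {l : List ℤ} (h : IsBlockWord l) {i : ℕ} (hi : i + 1 < l.length) :
    l[i] = 1 ↔ l[i + 1] = -1 := by
  induction h generalizing i with
  | nil => simp at hi
  | zero h ih =>
    rcases i with _ | i
    · simpa using h.getElem_zero_ne_neg_one (by simpa using hi)
    · exact ih (by simpa using hi)
  | pair h ih =>
    rcases i with _ | _ | i
    · simp
    · simpa using h.getElem_zero_ne_neg_one (by simpa using hi)
    · exact ih (by simpa using hi)

end IsBlockWord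

theorem isBlockWord_tmBlock (n : ℕ → ℕ) (k : ℕ) : IsBlockWord (tmBlock n k) := by
  unfold tmBlock
  split
  · exact IsBlockWord.flatten fun l hl => by
      rw [List.eq_of_mem_replicate hl]; exact IsBlockWord.nil.pair
  · induction n k with
    | zero => exact IsBlockWord.nil
    | succ t ih => exact ih.zero

def blockPrefix (n : ℕ → ℕ) (N : ℕ) : List ℤ := ((List.range N).map (tmBlock n)).flatten

theorem isBlockWord_blockPrefix (n : ℕ → ℕ) (N : ℕ) : IsBlockWord (blockPrefix n N) :=
  IsBlockWord.flatten <| List.forall_mem_map.2 fun k _ => isBlockWord_tmBlock n k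

theorem blockPrefix_succ (n : ℕ → ℕ) (N : ℕ) :
    blockPrefix n (N + 1) = blockPrefix n N ++ tmBlock n N := by
  simp [blockPrefix, List.range_succ]

theorem blockPrefix_prefix (n : ℕ → ℕ) {M N : ℕ} (h : M ≤ N) :
    blockPrefix n M <+: blockPrefix n N := by
  obtain ⟨t, rfl⟩ := Nat.exists_eq_add_of_le h
  simp only [blockPrefix, List.range_add, List.map_append, List.flatten_append]
  exact List.prefix_append _ _

theorem le_length_blockPrefix {n : ℕ → ℕ} (hn : ∀ k, 1 ≤ n k) (N : ℕ) :
    N ≤ (blockPrefix n N).length := by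
  induction N with
  | zero => simp
  | succ N ih =>
    have hk : 1 ≤ (tmBlock n N).length := by
      have := hn N
      unfold tmBlock; split <;> simp <;> omega
    rw [blockPrefix_succ, List.length_append]
    omega

theorem concatSeq_eq_getElem {n : ℕ → ℕ} (hn : ∀ k, 1 ≤ n k) {N i : ℕ}
    (hi : i < (blockPrefix n N).length) : concatSeq n i = (blockPrefix n N)[i] := by
  have hi' : i < (blockPrefix n (i + 1)).length := le_length_blockPrefix hn (i + 1)
  rw [concatSeq, ← blockPrefix, List.getD_eq_getElem _ _ hi']
  rcases le_total (i + 1) N with h | h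
  · exact (blockPrefix_prefix n h).getElem hi'
  · exact ((blockPrefix_prefix n h).getElem hi).symm

theorem concatSeq_length_blockPrefix_even {n : ℕ → ℕ} (hn : ∀ k, 1 ≤ n k) (p : ℕ) :
    concatSeq n (blockPrefix n (2 * p)).length = 1 := by
  obtain ⟨t, ht⟩ := Nat.exists_eq_add_of_le' (hn (2 * p))
  have hlen : (blockPrefix n (2 * p)).length < (blockPrefix n (2 * p + 1)).length := by
    simp [blockPrefix_succ, tmBlock, ht]
  rw [concatSeq_eq_getElem hn hlen]
  simp [blockPrefix_succ, tmBlock, ht, List.replicate_succ]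

theorem isBlockSeq_concatSeq {n : ℕ → ℕ} (hn : ∀ k, 1 ≤ n k) :
    IsBlockSeq fun i => (concatSeq n i : ℝ) where
  mem i := by
    have hi : i < (blockPrefix n (i + 1)).length := le_length_blockPrefix hn (i + 1)
    rw [concatSeq_eq_getElem hn hi]
    rcases (isBlockWord_blockPrefix n _).mem (List.getElem_mem hi) with h | h | h <;> simp [h]
  one_iff i := by
    have hi : i + 1 < (blockPrefix n (i + 2)).length := le_length_blockPrefix hn (i + 2)
    rw [concatSeq_eq_getElem hn hi, concatSeq_eq_getElem hn (Nat.lt_of_succ_lt hi)]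
    exact_mod_cast (isBlockWord_blockPrefix n _).getElem_eq_one_iff hi
  frequently_one := frequently_atTop.2 fun p =>
    ⟨_, (by omega : p ≤ 2 * p).trans (le_length_blockPrefix hn (2 * p)), by
      simp [concatSeq_length_blockPrefix_even hn p]⟩

/-- `q_c` is the larger root of `q² - (m + 2) q + 1 = (q - 1)² - m q`. -/
theorem critical_base_bound {M q : ℝ} (hM : 0 ≤ M)
    (hq : (M + 2 + Real.sqrt (M * (M + 4))) / 2 ≤ q) : M * q⁻¹ ≤ (1 - q⁻¹) ^ 2 := by
  have hs := Real.sq_sqrt (by positivity : 0 ≤ M * (M + 4))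
  have hs0 := Real.sqrt_nonneg (M * (M + 4))
  have hq0 : 0 < q := by linarith
  have key : M * q ≤ (q - 1) ^ 2 := by nlinarith
  calc M * q⁻¹ = M * q * q⁻¹ ^ 2 := by field_simp
    _ ≤ (q - 1) ^ 2 * q⁻¹ ^ 2 := by gcongr
    _ = (1 - q⁻¹) ^ 2 := by field_simp

theorem stmt18 (m : ℕ) (hm : 1 ≤ m) (q : ℝ)
    (hq : ((m : ℝ) + 2 + Real.sqrt (m * (m + 4))) / 2 ≤ q)
    (n : ℕ → ℕ) (hn : ∀ k, 1 ≤ n k)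
    (d : ℕ → ℤ) (hd : ∀ i, -(m : ℤ) ≤ d i ∧ d i ≤ (m : ℤ))
    (hsum : ∑' i : ℕ, (d i : ℝ) / q ^ (i + 1) =
      ∑' i : ℕ, (concatSeq n i : ℝ) / q ^ (i + 1)) :
    ∀ i, d i = concatSeq n i := by
  have hq1 : 1 < q := by
    have := Real.sqrt_nonneg ((m : ℝ) * (m + 4))
    have : (1 : ℝ) ≤ m := by exact_mod_cast hm
    linarith
  have hsum' : digitSum q⁻¹ (fun j => (d j : ℝ)) =
      digitSum q⁻¹ (fun j => (concatSeq n j : ℝ)) := by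
    simpa [digitSum, div_eq_mul_inv, inv_pow] using hsum
  exact congrFun ((isBlockSeq_concatSeq hn).eq_of_digitSum_eq (M := m) (by exact_mod_cast hm)
    (inv_pos.2 (by linarith)) (inv_lt_one_of_one_lt₀ hq1) (critical_base_bound m.cast_nonneg hq)
    (fun i => abs_le.2 (by exact_mod_cast hd i)) hsum')
end
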